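/- arXiv:2302.04704 — 13 statements merged into one kernel-verified Lean document; each statement's English description precedes it below -/
import Mathlib

section
/- Let J be a set and F a family of subsets of J closed under finite unions and intersections with ∅, J ∈ F. If f, g : J → ℝ are bounded F-measurable functions (where h is F-measurable means: for every s < t there exists A ∈ F with {h ≥ t} ⊆ A ⊆ {h ≥ s}), then f + g is bounded and F-measurable. -/
/-! Cover the range of `f` by finitely many windows `[a, a + δ)`, `δ = (t - s) / 3`. If
`f x + g x ≥ t` and `f x ∈ [a, a + δ)`, then `f x ≥ a` and `g x > t - a - δ`; so `x` lies in
`A a ∩ B a`, where `A a` sandwiches `{f ≥ a}` inside `{f ≥ a - δ}` and `B a` sandwiches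
`{g ≥ t - a - δ}` inside `{g ≥ t - a - 2δ}`. Every point of `A a ∩ B a` has `f + g ≥ t - 3δ = s`,
and the finite union of these sets is the required member of `F`. -/

/-- A function `h` is `F`-measurable if for all `s < t` there is `A ∈ F` with
`{h ≥ t} ⊆ A ⊆ {h ≥ s}`. -/
def FMeasurable {J : Type*} (F : Set (Set J)) (h : J → ℝ) : Prop :=
  ∀ s t : ℝ, s < t → ∃ A ∈ F, {x | t ≤ h x} ⊆ A ∧ A ⊆ {x | s ≤ h x}

lemma exists_finset_window_cover (M : ℝ) {δ : ℝ} (hδ : 0 < δ) :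
    ∃ T : Finset ℝ, ∀ y, |y| ≤ M → ∃ a ∈ T, a ≤ y ∧ y < a + δ := by
  refine ⟨(Finset.Icc ⌊-M / δ⌋ ⌊M / δ⌋).image (fun k : ℤ => k * δ), fun y hy => ?_⟩
  obtain ⟨hMy, hyM⟩ := abs_le.mp hy
  refine ⟨⌊y / δ⌋ * δ, Finset.mem_image_of_mem _ ?_, ?_, ?_⟩
  · exact Finset.mem_Icc.mpr ⟨Int.floor_mono (by gcongr), Int.floor_mono (by gcongr)⟩
  · exact (le_div_iff₀ hδ).mp (Int.floor_le _)
  · have := Int.lt_floor_add_one (y / δ)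
    rw [div_lt_iff₀ hδ] at this
    linarith

theorem FMeasurable.add {J : Type*} {F : Set (Set J)}
    (hempty : ∅ ∈ F) (hunion : ∀ A ∈ F, ∀ B ∈ F, A ∪ B ∈ F)
    (hinter : ∀ A ∈ F, ∀ B ∈ F, A ∩ B ∈ F) {f g : J → ℝ}
    (hfb : ∃ M : ℝ, ∀ x, |f x| ≤ M) (hf : FMeasurable F f) (hg : FMeasurable F g) :
    FMeasurable F (fun x => f x + g x) := by
  intro s t hst
  obtain ⟨M, hM⟩ := hfb
  set δ := (t - s) / 3 with hδ_def
  have hδ : 0 < δ := by linarith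
  obtain ⟨T, hT⟩ := exists_finset_window_cover M hδ
  choose A hAF hA using fun a : ℝ => hf (a - δ) a (by linarith)
  choose B hBF hB using fun a : ℝ => hg (t - a - 2 * δ) (t - a - δ) (by linarith)
  refine ⟨T.sup (fun a => A a ∩ B a),
    Finset.sup_mem F hempty hunion T _ fun a _ => hinter _ (hAF a) _ (hBF a), ?_, ?_⟩
  all_goals rw [Finset.sup_set_eq_biUnion]
  · rintro x (hx : t ≤ f x + g x)
    obtain ⟨a, haT, hfa, hfa'⟩ := hT (f x) (hM x)
    have hgx : t - a - δ ≤ g x := by linarith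
    exact Set.mem_biUnion haT ⟨(hA a).1 hfa, (hB a).1 hgx⟩
  · intro x hx
    obtain ⟨a, -, hxA, hxB⟩ := Set.mem_iUnion₂.mp hx
    have hfx : a - δ ≤ f x := (hA a).2 hxA
    have hgx : t - a - 2 * δ ≤ g x := (hB a).2 hxB
    show s ≤ f x + g x
    linarith

theorem stmt_0_general {J : Type*} (F : Set (Set J))
    (hempty : ∅ ∈ F)
    (hunion : ∀ A ∈ F, ∀ B ∈ F, A ∪ B ∈ F)
    (hinter : ∀ A ∈ F, ∀ B ∈ F, A ∩ B ∈ F)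
    (f g : J → ℝ)
    (hfb : ∃ M : ℝ, ∀ x, |f x| ≤ M) (hgb : ∃ M : ℝ, ∀ x, |g x| ≤ M)
    (hf : FMeasurable F f) (hg : FMeasurable F g) :
    (∃ M : ℝ, ∀ x, |f x + g x| ≤ M) ∧ FMeasurable F (fun x => f x + g x) := by
  obtain ⟨Mf, hMf⟩ := hfb
  obtain ⟨Mg, hMg⟩ := hgb
  exact ⟨⟨Mf + Mg, fun x => (abs_add_le _ _).trans (add_le_add (hMf x) (hMg x))⟩,
    FMeasurable.add hempty hunion hinter ⟨Mf, hMf⟩ hf hg⟩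

theorem stmt_0 {J : Type*} (F : Set (Set J))
    (hempty : ∅ ∈ F) (huniv : Set.univ ∈ F)
    (hunion : ∀ A ∈ F, ∀ B ∈ F, A ∪ B ∈ F)
    (hinter : ∀ A ∈ F, ∀ B ∈ F, A ∩ B ∈ F)
    (f g : J → ℝ)
    (hfb : ∃ M : ℝ, ∀ x, |f x| ≤ M) (hgb : ∃ M : ℝ, ∀ x, |g x| ≤ M)
    (hf : FMeasurable F f) (hg : FMeasurable F g) :
    (∃ M : ℝ, ∀ x, |f x + g x| ≤ M) ∧ FMeasurable F (fun x => f x + g x) :=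
  stmt_0_general F hempty hunion hinter f g hfb hgb hf hg
end

section
/- A setfunction φ on a set-algebra (J, B) can be written as the difference of two increasing (monotone with respect to inclusion) setfunctions if and only if φ has bounded variation, i.e., there exists K ∈ ℝ such that for every finite chain ∅ = X₀ ⊆ X₁ ⊆ … ⊆ Xₙ = J of sets in B, ∑ᵢ |φ(Xᵢ) − φ(Xᵢ₋₁)| ≤ K. -/
/-!
If `φ = μ - ν` with `μ, ν` increasing, each step of a chain satisfies
`|Δφ| ≤ Δμ + Δν`, so the variation along a chain from `⊥` to `⊤` telescopes to at most
`(μ + ν) ⊤ - (μ + ν) ⊥`. Conversely, let `V x` be the supremum of the variations of `φ` along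
chains from `⊥` to `x`; it is finite because every such chain extends to `⊤`. Extending a chain
by one step gives `V x + |φ y - φ x| ≤ V y` for `x ≤ y`, so both `V` and `V - φ` are increasing,
and `φ = V - (V - φ)`.
-/

open Finset Set

section ChainVariation

variable {α : Type*} [Preorder α]

def chainVariation (φ : α → ℝ) (X : ℕ → α) (n : ℕ) : ℝ :=
  ∑ i ∈ range n, |φ (X (i + 1)) - φ (X i)|

def IsChainIn (B : Set α) (X : ℕ → α) (n : ℕ) : Prop :=
  (∀ i ≤ n, X i ∈ B) ∧ ∀ i < n, X i ≤ X (i + 1)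

theorem chainVariation_le_of_eqOn_sub {B : Set α} {φ μ ν : α → ℝ} (hμ : MonotoneOn μ B)
    (hν : MonotoneOn ν B) (hφ : EqOn φ (μ - ν) B) {X : ℕ → α} {n : ℕ} (hX : IsChainIn B X n) :
    chainVariation φ X n ≤ (μ + ν) (X n) - (μ + ν) (X 0) := by
  rw [← Finset.sum_range_sub (fun i => (μ + ν) (X i)), chainVariation]
  refine Finset.sum_le_sum fun i hi => ?_
  have hi : i < n := Finset.mem_range.mp hi
  have hXi : X i ∈ B := hX.1 i hi.le
  have hXi' : X (i + 1) ∈ B := hX.1 (i + 1) hi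
  have hμi := hμ hXi hXi' (hX.2 i hi)
  have hνi := hν hXi hXi' (hX.2 i hi)
  rw [hφ hXi, hφ hXi', abs_le]
  simp only [Pi.add_apply, Pi.sub_apply]
  constructor <;> linarith

variable [OrderBot α]

def chainVariations (B : Set α) (φ : α → ℝ) (x : α) : Set ℝ :=
  {s | ∃ n X, IsChainIn B X n ∧ X 0 = ⊥ ∧ X n = x ∧ chainVariation φ X n = s}

noncomputable def variationTo (B : Set α) (φ : α → ℝ) (x : α) : ℝ :=
  sSup (chainVariations B φ x)

variable {B : Set α} {φ : α → ℝ}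

theorem zero_mem_chainVariations (hbot : ⊥ ∈ B) : (0 : ℝ) ∈ chainVariations B φ ⊥ :=
  ⟨0, fun _ => ⊥, ⟨fun _ _ => hbot, fun _ h => absurd h (Nat.not_lt_zero _)⟩, rfl, rfl, rfl⟩

theorem add_abs_sub_mem_chainVariations {x y : α} {s : ℝ} (hs : s ∈ chainVariations B φ x)
    (hy : y ∈ B) (hxy : x ≤ y) : s + |φ y - φ x| ∈ chainVariations B φ y := by
  obtain ⟨n, X, ⟨hXB, hXle⟩, hX0, hXn, rfl⟩ := hs
  have hagree : ∀ i ≤ n, Function.update X (n + 1) y i = X i := fun i hi =>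
    Function.update_of_ne (by omega) _ _
  refine ⟨n + 1, Function.update X (n + 1) y, ⟨fun i hi => ?_, fun i hi => ?_⟩, ?_, by simp, ?_⟩
  · rcases Nat.lt_or_ge i (n + 1) with hi' | hi'
    · rw [hagree i (by omega)]
      exact hXB i (by omega)
    · rw [show i = n + 1 by omega, Function.update_self]
      exact hy
  · rw [hagree i (by omega)]
    rcases Nat.lt_or_ge i n with hi' | hi'
    · rw [hagree (i + 1) hi']
      exact hXle i hi'
    · rw [show i = n by omega, Function.update_self, hXn]
      exact hxy
  · rw [hagree 0 (Nat.zero_le n), hX0]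
  · rw [chainVariation, Finset.sum_range_succ, Function.update_self, hagree n le_rfl, hXn,
      chainVariation]
    congr 1
    refine Finset.sum_congr rfl fun i hi => ?_
    have hi : i < n := Finset.mem_range.mp hi
    rw [hagree i hi.le, hagree (i + 1) hi]

theorem chainVariations_nonempty (hbot : ⊥ ∈ B) {x : α} (hx : x ∈ B) :
    (chainVariations B φ x).Nonempty :=
  ⟨_, add_abs_sub_mem_chainVariations (zero_mem_chainVariations hbot) hx bot_le⟩

variable [OrderTop α]

def HasBoundedChainVariation (B : Set α) (φ : α → ℝ) : Prop :=
  ∃ K : ℝ, ∀ n X, IsChainIn B X n → X 0 = ⊥ → X n = ⊤ → chainVariation φ X n ≤ K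

theorem bddAbove_chainVariations (htop : ⊤ ∈ B) (hφ : HasBoundedChainVariation B φ) (x : α) :
    BddAbove (chainVariations B φ x) := by
  obtain ⟨K, hK⟩ := hφ
  refine ⟨K, fun s hs => ?_⟩
  obtain ⟨n, X, hX, hX0, hXn, hXs⟩ := add_abs_sub_mem_chainVariations hs htop le_top
  linarith [hK n X hX hX0 hXn, abs_nonneg (φ ⊤ - φ x)]

theorem variationTo_add_abs_sub_le (hbot : ⊥ ∈ B) (htop : ⊤ ∈ B)
    (hφ : HasBoundedChainVariation B φ) {x y : α} (hx : x ∈ B) (hy : y ∈ B) (hxy : x ≤ y) :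
    variationTo B φ x + |φ y - φ x| ≤ variationTo B φ y := by
  rw [← le_sub_iff_add_le]
  refine csSup_le (chainVariations_nonempty hbot hx) fun s hs => le_sub_iff_add_le.mpr ?_
  exact le_csSup (bddAbove_chainVariations htop hφ y) (add_abs_sub_mem_chainVariations hs hy hxy)

theorem monotoneOn_variationTo (hbot : ⊥ ∈ B) (htop : ⊤ ∈ B)
    (hφ : HasBoundedChainVariation B φ) : MonotoneOn (variationTo B φ) B :=
  fun x hx y hy hxy => by
    linarith [variationTo_add_abs_sub_le hbot htop hφ hx hy hxy, abs_nonneg (φ y - φ x)]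

theorem monotoneOn_variationTo_sub (hbot : ⊥ ∈ B) (htop : ⊤ ∈ B)
    (hφ : HasBoundedChainVariation B φ) : MonotoneOn (variationTo B φ - φ) B :=
  fun x hx y hy hxy => by
    simp only [Pi.sub_apply]
    linarith [variationTo_add_abs_sub_le hbot htop hφ hx hy hxy, le_abs_self (φ y - φ x)]

theorem exists_monotoneOn_sub_iff_hasBoundedChainVariation (hbot : ⊥ ∈ B) (htop : ⊤ ∈ B) :
    (∃ μ ν : α → ℝ, MonotoneOn μ B ∧ MonotoneOn ν B ∧ EqOn φ (μ - ν) B) ↔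
      HasBoundedChainVariation B φ := by
  constructor
  · rintro ⟨μ, ν, hμ, hν, hφ⟩
    refine ⟨(μ + ν) ⊤ - (μ + ν) ⊥, fun n X hX hX0 hXn => ?_⟩
    simpa only [hX0, hXn] using chainVariation_le_of_eqOn_sub hμ hν hφ hX
  · intro hφ
    exact ⟨variationTo B φ, variationTo B φ - φ, monotoneOn_variationTo hbot htop hφ,
      monotoneOn_variationTo_sub hbot htop hφ, fun x _ => by simp⟩

end ChainVariation

theorem stmt_1_general {J : Type*} (B : Set (Set J))
    (hempty : ∅ ∈ B) (huniv : Set.univ ∈ B)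
    (φ : Set J → ℝ) :
    (∃ μ ν : Set J → ℝ,
        (∀ X ∈ B, ∀ Y ∈ B, X ⊆ Y → μ X ≤ μ Y) ∧
        (∀ X ∈ B, ∀ Y ∈ B, X ⊆ Y → ν X ≤ ν Y) ∧
        (∀ X ∈ B, φ X = μ X - ν X)) ↔
    (∃ K : ℝ, ∀ (n : ℕ) (X : ℕ → Set J),
        (∀ i ≤ n, X i ∈ B) → X 0 = ∅ → X n = Set.univ →
        (∀ i < n, X i ⊆ X (i + 1)) →
        ∑ i ∈ Finset.range n, |φ (X (i + 1)) - φ (X i)| ≤ K) := by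
  refine (exists_monotoneOn_sub_iff_hasBoundedChainVariation hempty huniv).trans ?_
  exact exists_congr fun K => forall₂_congr fun n X =>
    ⟨fun hK hXB h0 hn hX => hK ⟨hXB, hX⟩ h0 hn, fun hK hX h0 hn => hK hX.1 h0 hn hX.2⟩

theorem stmt_1 {J : Type*} (B : Set (Set J))
    (hempty : ∅ ∈ B) (huniv : Set.univ ∈ B)
    (hcompl : ∀ A ∈ B, Aᶜ ∈ B)
    (hunion : ∀ A ∈ B, ∀ C ∈ B, A ∪ C ∈ B)
    (hinter : ∀ A ∈ B, ∀ C ∈ B, A ∩ C ∈ B)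
    (φ : Set J → ℝ) :
    (∃ μ ν : Set J → ℝ,
        (∀ X ∈ B, ∀ Y ∈ B, X ⊆ Y → μ X ≤ μ Y) ∧
        (∀ X ∈ B, ∀ Y ∈ B, X ⊆ Y → ν X ≤ ν Y) ∧
        (∀ X ∈ B, φ X = μ X - ν X)) ↔
    (∃ K : ℝ, ∀ (n : ℕ) (X : ℕ → Set J),
        (∀ i ≤ n, X i ∈ B) → X 0 = ∅ → X n = Set.univ →
        (∀ i < n, X i ⊆ X (i + 1)) →
        ∑ i ∈ Finset.range n, |φ (X (i + 1)) - φ (X i)| ≤ K) :=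
  stmt_1_general B hempty huniv φ
end

section
/- Every bounded submodular setfunction on a set-algebra has bounded variation: if φ : B → ℝ is submodular and bounded, then there is K ∈ ℝ such that for every finite chain ∅ = X₀ ⊆ X₁ ⊆ … ⊆ Xₙ = J in B, ∑ᵢ |φ(Xᵢ) − φ(Xᵢ₋₁)| ≤ K. In fact one may take K = 2 sup φ − φ(J) − φ(∅). -/
/-!
Along a chain `X₀ ⊆ ⋯ ⊆ Xₙ`, submodularity applied to `S ∪ (X_{i+1} \ X_i)` and `X_i` (for
`S ⊆ X_i`) shows that every increase of `φ` can be copied onto a set `S` growing inside the chain.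
Hence `φ X₀` plus the positive variation is at most a value of `φ` on `B`, so at most `sup φ`. Since the
increments telescope to `φ Xₙ - φ X₀`, the total variation `∑ |dᵢ| = 2 ∑ dᵢ⁺ - ∑ dᵢ` is at most
`2 sup φ - φ Xₙ - φ X₀`.
-/

section Submodular

variable {J : Type*} {B : Set (Set J)} {φ : Set J → ℝ}

theorem sub_le_sub_union_sdiff_of_submodular
    (hsub : ∀ X ∈ B, ∀ Y ∈ B, φ (X ∪ Y) + φ (X ∩ Y) ≤ φ X + φ Y)
    {S Y Z : Set J} (hT : S ∪ Z \ Y ∈ B) (hY : Y ∈ B) (hSY : S ⊆ Y) (hYZ : Y ⊆ Z) :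
    φ Z - φ Y ≤ φ (S ∪ Z \ Y) - φ S := by
  have hunion : S ∪ Z \ Y ∪ Y = Z := by
    rw [Set.union_assoc, Set.sdiff_union_of_subset hYZ, Set.union_eq_right.mpr (hSY.trans hYZ)]
  have hinter : (S ∪ Z \ Y) ∩ Y = S := by
    rw [Set.union_inter_distrib_right, Set.sdiff_inter_self, Set.union_empty,
      Set.inter_eq_left.mpr hSY]
  have := hsub _ hT _ hY
  rw [hunion, hinter] at this
  linarith

theorem exists_mem_add_sum_posPart_le_of_submodular
    (hsdiff : ∀ A ∈ B, ∀ C ∈ B, A \ C ∈ B) (hunion : ∀ A ∈ B, ∀ C ∈ B, A ∪ C ∈ B)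
    (hsub : ∀ X ∈ B, ∀ Y ∈ B, φ (X ∪ Y) + φ (X ∩ Y) ≤ φ X + φ Y)
    {n : ℕ} {X : ℕ → Set J} (hX : ∀ i ≤ n, X i ∈ B) (hmono : ∀ i < n, X i ⊆ X (i + 1)) :
    ∀ m ≤ n, ∃ S ∈ B, S ⊆ X m ∧
      φ (X 0) + ∑ i ∈ Finset.range m, (φ (X (i + 1)) - φ (X i))⁺ ≤ φ S := by
  intro m
  induction m with
  | zero => exact fun _ ↦ ⟨X 0, hX 0 (Nat.zero_le n), subset_rfl, by simp⟩
  | succ m ih =>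
    intro (hm : m < n)
    obtain ⟨S, hSB, hSX, hS⟩ := ih hm.le
    have hstep : X m ⊆ X (m + 1) := hmono m hm
    rw [Finset.sum_range_succ]
    rcases le_total (φ (X (m + 1)) - φ (X m)) 0 with hdec | hinc
    · refine ⟨S, hSB, hSX.trans hstep, ?_⟩
      rw [posPart_eq_zero.mpr hdec]
      linarith
    · have hT : S ∪ X (m + 1) \ X m ∈ B := hunion _ hSB _ (hsdiff _ (hX _ hm) _ (hX _ hm.le))
      refine ⟨S ∪ X (m + 1) \ X m, hT, Set.union_subset (hSX.trans hstep) Set.sdiff_subset, ?_⟩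
      rw [posPart_eq_self.mpr hinc]
      linarith [sub_le_sub_union_sdiff_of_submodular hsub hT (hX _ hm.le) hSX hstep]

theorem sum_abs_sub_le_of_submodular
    (hsdiff : ∀ A ∈ B, ∀ C ∈ B, A \ C ∈ B) (hunion : ∀ A ∈ B, ∀ C ∈ B, A ∪ C ∈ B)
    (hsub : ∀ X ∈ B, ∀ Y ∈ B, φ (X ∪ Y) + φ (X ∩ Y) ≤ φ X + φ Y) (hbdd : BddAbove (φ '' B))
    {n : ℕ} {X : ℕ → Set J} (hX : ∀ i ≤ n, X i ∈ B) (hmono : ∀ i < n, X i ⊆ X (i + 1)) :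
    ∑ i ∈ Finset.range n, |φ (X (i + 1)) - φ (X i)| ≤ 2 * sSup (φ '' B) - φ (X n) - φ (X 0) := by
  obtain ⟨S, hSB, -, hS⟩ :=
    exists_mem_add_sum_posPart_le_of_submodular hsdiff hunion hsub hX hmono n le_rfl
  have hSle : φ S ≤ sSup (φ '' B) := le_csSup hbdd ⟨S, hSB, rfl⟩
  have habs (a : ℝ) : |a| = 2 * a⁺ - a := by
    linarith [posPart_add_negPart a, posPart_sub_negPart a]
  calc ∑ i ∈ Finset.range n, |φ (X (i + 1)) - φ (X i)|
      = 2 * ∑ i ∈ Finset.range n, (φ (X (i + 1)) - φ (X i))⁺ -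
          ∑ i ∈ Finset.range n, (φ (X (i + 1)) - φ (X i)) := by
        simp only [habs, Finset.mul_sum, Finset.sum_sub_distrib]
    _ ≤ 2 * sSup (φ '' B) - φ (X n) - φ (X 0) := by
        rw [Finset.sum_range_sub (fun i ↦ φ (X i))]
        linarith

end Submodular

theorem stmt_2_general {J : Type*} (B : Set (Set J))
    (hcompl : ∀ A ∈ B, Aᶜ ∈ B)
    (hunion : ∀ A ∈ B, ∀ C ∈ B, A ∪ C ∈ B)
    (hinter : ∀ A ∈ B, ∀ C ∈ B, A ∩ C ∈ B)
    (φ : Set J → ℝ)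
    (hbdd : ∃ M : ℝ, ∀ X ∈ B, |φ X| ≤ M)
    (hsub : ∀ X ∈ B, ∀ Y ∈ B, φ (X ∪ Y) + φ (X ∩ Y) ≤ φ X + φ Y) :
    (∃ K : ℝ, ∀ (n : ℕ) (X : ℕ → Set J),
        (∀ i ≤ n, X i ∈ B) → X 0 = ∅ → X n = Set.univ →
        (∀ i < n, X i ⊆ X (i + 1)) →
        ∑ i ∈ Finset.range n, |φ (X (i + 1)) - φ (X i)| ≤ K) ∧
    (∀ (n : ℕ) (X : ℕ → Set J),
        (∀ i ≤ n, X i ∈ B) → X 0 = ∅ → X n = Set.univ →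
        (∀ i < n, X i ⊆ X (i + 1)) →
        ∑ i ∈ Finset.range n, |φ (X (i + 1)) - φ (X i)| ≤
          2 * sSup (φ '' B) - φ Set.univ - φ ∅) := by
  obtain ⟨M, hM⟩ := hbdd
  have hbddAbove : BddAbove (φ '' B) := ⟨M, by
    rintro _ ⟨A, hA, rfl⟩
    exact (abs_le.mp (hM A hA)).2⟩
  have hsdiff : ∀ A ∈ B, ∀ C ∈ B, A \ C ∈ B := fun A hA C hC ↦ hinter A hA _ (hcompl C hC)
  have bound : ∀ (n : ℕ) (X : ℕ → Set J),
      (∀ i ≤ n, X i ∈ B) → X 0 = ∅ → X n = Set.univ → (∀ i < n, X i ⊆ X (i + 1)) →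
      ∑ i ∈ Finset.range n, |φ (X (i + 1)) - φ (X i)| ≤
        2 * sSup (φ '' B) - φ Set.univ - φ ∅ := by
    intro n X hX h0 hn hmono
    rw [← h0, ← hn]
    exact sum_abs_sub_le_of_submodular hsdiff hunion hsub hbddAbove hX hmono
  exact ⟨⟨_, bound⟩, bound⟩

theorem stmt_2 {J : Type*} (B : Set (Set J))
    (hempty : ∅ ∈ B) (huniv : Set.univ ∈ B)
    (hcompl : ∀ A ∈ B, Aᶜ ∈ B)
    (hunion : ∀ A ∈ B, ∀ C ∈ B, A ∪ C ∈ B)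
    (hinter : ∀ A ∈ B, ∀ C ∈ B, A ∩ C ∈ B)
    (φ : Set J → ℝ)
    (hbdd : ∃ M : ℝ, ∀ X ∈ B, |φ X| ≤ M)
    (hsub : ∀ X ∈ B, ∀ Y ∈ B, φ (X ∪ Y) + φ (X ∩ Y) ≤ φ X + φ Y) :
    (∃ K : ℝ, ∀ (n : ℕ) (X : ℕ → Set J),
        (∀ i ≤ n, X i ∈ B) → X 0 = ∅ → X n = Set.univ →
        (∀ i < n, X i ⊆ X (i + 1)) →
        ∑ i ∈ Finset.range n, |φ (X (i + 1)) - φ (X i)| ≤ K) ∧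
    (∀ (n : ℕ) (X : ℕ → Set J),
        (∀ i ≤ n, X i ∈ B) → X 0 = ∅ → X n = Set.univ →
        (∀ i < n, X i ⊆ X (i + 1)) →
        ∑ i ∈ Finset.range n, |φ (X (i + 1)) - φ (X i)| ≤
          2 * sSup (φ '' B) - φ Set.univ - φ ∅) :=
  stmt_2_general B hcompl hunion hinter φ hbdd hsub
end

section
/- Let φ be a bounded submodular setfunction on a set-algebra (J, B) with φ(∅) = 0. Then φ^{ls}, defined by φ^{ls}(X) = sup{φ(Y) : Y ∈ B, Y ⊆ X}, is increasing and subadditive, and the difference φ − φ^{ls} is decreasing and subadditive. -/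
/-!
Every bound comes from one application (two for the last claim) of submodularity, after which
one takes suprema over the sets `Z ⊆ X` (and `W ⊆ Y`) in `B`. For `Z ⊆ X ⊆ Y`, the set
`W = Z ∪ (Y \ X)` satisfies `X ∪ W = Y` and `X ∩ W = Z`, so `φ Z + φ Y ≤ φ X + φ W`, and
`φ W ≤ φ^{ls} Y = lowerEnvelope B φ Y`. For disjoint `X`, `Y` and `Z ⊆ X`, `W ⊆ Y`,
submodularity at `(X, Z ∪ Y)` and at `(Y, Z ∪ W)` adds up to
`φ Z + φ W + φ (X ∪ Y) ≤ φ X + φ Y + φ (Z ∪ W)`.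
-/

namespace SetFunction

variable {J : Type*} {B : Set (Set J)} {φ : Set J → ℝ}

noncomputable def lowerEnvelope (B : Set (Set J)) (φ : Set J → ℝ) (X : Set J) : ℝ :=
  sSup {r | ∃ Y ∈ B, Y ⊆ X ∧ r = φ Y}

theorem le_lowerEnvelope (hbdd : BddAbove (φ '' B)) {X Z : Set J} (hZ : Z ∈ B) (hZX : Z ⊆ X) :
    φ Z ≤ lowerEnvelope B φ X := by
  refine le_csSup ?_ ⟨Z, hZ, hZX, rfl⟩
  obtain ⟨M, hM⟩ := hbdd
  exact ⟨M, by rintro r ⟨Y, hY, -, rfl⟩; exact hM ⟨Y, hY, rfl⟩⟩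

theorem lowerEnvelope_le (hempty : ∅ ∈ B) {X : Set J} {c : ℝ}
    (h : ∀ Z ∈ B, Z ⊆ X → φ Z ≤ c) : lowerEnvelope B φ X ≤ c := by
  refine csSup_le ⟨φ ∅, ∅, hempty, Set.empty_subset X, rfl⟩ ?_
  rintro r ⟨Z, hZ, hZX, rfl⟩
  exact h Z hZ hZX

theorem lowerEnvelope_add_le (hempty : ∅ ∈ B) {X Y : Set J} {c : ℝ}
    (h : ∀ Z ∈ B, Z ⊆ X → ∀ W ∈ B, W ⊆ Y → φ Z + φ W ≤ c) :
    lowerEnvelope B φ X + lowerEnvelope B φ Y ≤ c := by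
  rw [← le_sub_iff_add_le]
  refine lowerEnvelope_le hempty fun Z hZ hZX => ?_
  rw [le_sub_comm]
  exact lowerEnvelope_le hempty fun W hW hWY => by linarith [h Z hZ hZX W hW hWY]

theorem lowerEnvelope_mono (hempty : ∅ ∈ B) (hbdd : BddAbove (φ '' B)) :
    Monotone (lowerEnvelope B φ) := fun _ _ hXY =>
  lowerEnvelope_le hempty fun _ hZ hZX => le_lowerEnvelope hbdd hZ (hZX.trans hXY)

theorem lowerEnvelope_union_le
    (hsub : ∀ X ∈ B, ∀ Y ∈ B, φ (X ∪ Y) + φ (X ∩ Y) ≤ φ X + φ Y)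
    (hempty : ∅ ∈ B) (hbdd : BddAbove (φ '' B)) (hinter : ∀ A ∈ B, ∀ C ∈ B, A ∩ C ∈ B)
    (h0 : φ ∅ = 0)
    {X Y : Set J} (hX : X ∈ B) (hY : Y ∈ B) (hXY : Disjoint X Y) :
    lowerEnvelope B φ (X ∪ Y) ≤ lowerEnvelope B φ X + lowerEnvelope B φ Y := by
  refine lowerEnvelope_le hempty fun Z hZ hZXY => ?_
  have hsplit := hsub _ (hinter Z hZ X hX) _ (hinter Z hZ Y hY)
  rw [← Set.inter_union_distrib_left, Set.inter_eq_left.2 hZXY,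
    (hXY.mono Set.inter_subset_right Set.inter_subset_right).inter_eq, h0] at hsplit
  linarith [le_lowerEnvelope hbdd (hinter Z hZ X hX) (Set.inter_subset_right : Z ∩ X ⊆ X),
    le_lowerEnvelope hbdd (hinter Z hZ Y hY) (Set.inter_subset_right : Z ∩ Y ⊆ Y)]

theorem sub_lowerEnvelope_le_of_subset
    (hsub : ∀ X ∈ B, ∀ Y ∈ B, φ (X ∪ Y) + φ (X ∩ Y) ≤ φ X + φ Y)
    (hempty : ∅ ∈ B) (hbdd : BddAbove (φ '' B)) (hunion : ∀ A ∈ B, ∀ C ∈ B, A ∪ C ∈ B)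
    (hdiff : ∀ A ∈ B, ∀ C ∈ B, A \ C ∈ B)
    {X Y : Set J} (hX : X ∈ B) (hY : Y ∈ B) (hXY : X ⊆ Y) :
    φ Y - lowerEnvelope B φ Y ≤ φ X - lowerEnvelope B φ X := by
  suffices lowerEnvelope B φ X ≤ φ X - φ Y + lowerEnvelope B φ Y by linarith
  refine lowerEnvelope_le hempty fun Z hZ hZX => ?_
  have hW := hunion Z hZ _ (hdiff Y hY X hX)
  have hmod := hsub X hX _ hW
  rw [← Set.union_assoc, Set.union_eq_left.2 hZX, Set.union_sdiff_cancel hXY,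
    Set.inter_union_distrib_left, Set.inter_eq_right.2 hZX, Set.inter_sdiff_self,
    Set.union_empty] at hmod
  linarith [le_lowerEnvelope hbdd hW (Set.union_subset (hZX.trans hXY) Set.sdiff_subset)]

theorem sub_lowerEnvelope_union_le
    (hsub : ∀ X ∈ B, ∀ Y ∈ B, φ (X ∪ Y) + φ (X ∩ Y) ≤ φ X + φ Y)
    (hempty : ∅ ∈ B) (hbdd : BddAbove (φ '' B)) (hunion : ∀ A ∈ B, ∀ C ∈ B, A ∪ C ∈ B)
    {X Y : Set J} (hX : X ∈ B) (hY : Y ∈ B) (hXY : Disjoint X Y) :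
    φ (X ∪ Y) - lowerEnvelope B φ (X ∪ Y) ≤
      (φ X - lowerEnvelope B φ X) + (φ Y - lowerEnvelope B φ Y) := by
  suffices lowerEnvelope B φ X + lowerEnvelope B φ Y ≤
      φ X + φ Y + lowerEnvelope B φ (X ∪ Y) - φ (X ∪ Y) by linarith
  refine lowerEnvelope_add_le hempty fun Z hZ hZX W hW hWY => ?_
  have hmodX := hsub X hX _ (hunion Z hZ Y hY)
  rw [← Set.union_assoc, Set.union_eq_left.2 hZX, Set.inter_union_distrib_left,
    Set.inter_eq_right.2 hZX, hXY.inter_eq, Set.union_empty] at hmodX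
  have hmodY := hsub Y hY _ (hunion Z hZ W hW)
  rw [Set.union_left_comm, Set.union_eq_left.2 hWY,
    Set.inter_union_distrib_left, Set.inter_eq_right.2 hWY,
    (hXY.symm.mono_right hZX).inter_eq, Set.empty_union] at hmodY
  linarith [le_lowerEnvelope hbdd (hunion Z hZ W hW) (Set.union_subset_union hZX hWY)]

end SetFunction

open SetFunction in
theorem stmt_3_general {J : Type*} (B : Set (Set J))
    (hempty : ∅ ∈ B)
    (hcompl : ∀ A ∈ B, Aᶜ ∈ B)
    (hunion : ∀ A ∈ B, ∀ C ∈ B, A ∪ C ∈ B)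
    (hinter : ∀ A ∈ B, ∀ C ∈ B, A ∩ C ∈ B)
    (φ : Set J → ℝ)
    (hbdd : ∃ M : ℝ, ∀ X ∈ B, |φ X| ≤ M)
    (hsub : ∀ X ∈ B, ∀ Y ∈ B, φ (X ∪ Y) + φ (X ∩ Y) ≤ φ X + φ Y)
    (h0 : φ ∅ = 0)
    (ls : Set J → ℝ)
    (hls : ∀ X, ls X = sSup {r | ∃ Y ∈ B, Y ⊆ X ∧ r = φ Y}) :
    (∀ X ∈ B, ∀ Y ∈ B, X ⊆ Y → ls X ≤ ls Y) ∧
    (∀ X ∈ B, ∀ Y ∈ B, Disjoint X Y → ls (X ∪ Y) ≤ ls X + ls Y) ∧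
    (∀ X ∈ B, ∀ Y ∈ B, X ⊆ Y → φ Y - ls Y ≤ φ X - ls X) ∧
    (∀ X ∈ B, ∀ Y ∈ B, Disjoint X Y →
      φ (X ∪ Y) - ls (X ∪ Y) ≤ (φ X - ls X) + (φ Y - ls Y)) := by
  obtain ⟨M, hM⟩ := hbdd
  have hbdd : BddAbove (φ '' B) := ⟨M, by rintro _ ⟨X, hX, rfl⟩; exact (abs_le.1 (hM X hX)).2⟩
  have hdiff : ∀ A ∈ B, ∀ C ∈ B, A \ C ∈ B := fun A hA C hC => hinter A hA _ (hcompl C hC)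
  obtain rfl : ls = lowerEnvelope B φ := funext hls
  exact ⟨fun _ _ _ _ hXY => lowerEnvelope_mono hempty hbdd hXY,
    fun _ hX _ hY => lowerEnvelope_union_le hsub hempty hbdd hinter h0 hX hY,
    fun _ hX _ hY => sub_lowerEnvelope_le_of_subset hsub hempty hbdd hunion hdiff hX hY,
    fun _ hX _ hY => sub_lowerEnvelope_union_le hsub hempty hbdd hunion hX hY⟩

theorem stmt_3 {J : Type*} (B : Set (Set J))
    (hempty : ∅ ∈ B) (huniv : Set.univ ∈ B)
    (hcompl : ∀ A ∈ B, Aᶜ ∈ B)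
    (hunion : ∀ A ∈ B, ∀ C ∈ B, A ∪ C ∈ B)
    (hinter : ∀ A ∈ B, ∀ C ∈ B, A ∩ C ∈ B)
    (φ : Set J → ℝ)
    (hbdd : ∃ M : ℝ, ∀ X ∈ B, |φ X| ≤ M)
    (hsub : ∀ X ∈ B, ∀ Y ∈ B, φ (X ∪ Y) + φ (X ∩ Y) ≤ φ X + φ Y)
    (h0 : φ ∅ = 0)
    (ls : Set J → ℝ)
    (hls : ∀ X, ls X = sSup {r | ∃ Y ∈ B, Y ⊆ X ∧ r = φ Y}) :
    (∀ X ∈ B, ∀ Y ∈ B, X ⊆ Y → ls X ≤ ls Y) ∧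
    (∀ X ∈ B, ∀ Y ∈ B, Disjoint X Y → ls (X ∪ Y) ≤ ls X + ls Y) ∧
    (∀ X ∈ B, ∀ Y ∈ B, X ⊆ Y → φ Y - ls Y ≤ φ X - ls X) ∧
    (∀ X ∈ B, ∀ Y ∈ B, Disjoint X Y →
      φ (X ∪ Y) - ls (X ∪ Y) ≤ (φ X - ls X) + (φ Y - ls Y)) :=
  stmt_3_general B hempty hcompl hunion hinter φ hbdd hsub h0 ls hls
end

section
/- Let F be a lattice family of subsets of J and φ : F → ℝ submodular. Then the setfunction φ^{li} : 2^J → ℝ defined by φ^{li}(X) = inf{φ(Y) : Y ∈ F, Y ⊆ X}, and the setfunction φ^{ui}(X) = inf{φ(Y) : Y ∈ F, Y ⊇ X}, are both submodular on 2^J (assuming the infima are finite, e.g. φ bounded and ∅, J ∈ F). -/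
/-!
Given `a ≤ x` and `b ≤ y` in `F`, the elements `a ⊔ b ≤ x ⊔ y` and `a ⊓ b ≤ x ⊓ y` lie in `F`, so
submodularity of `φ` gives `φ^{li}(x ⊔ y) + φ^{li}(x ⊓ y) ≤ φ a + φ b`; taking the infimum over `a`
and `b` yields submodularity of `φ^{li}`. The inequality is invariant under swapping `⊔` and `⊓`, so
the statement for `φ^{ui}` is the one for `φ^{li}` in the order dual.
-/

open OrderDual Set

section

variable {α : Type*} [Lattice α]

def IsSubmodularOn (F : Set α) (φ : α → ℝ) : Prop :=
  ∀ ⦃u⦄, u ∈ F → ∀ ⦃v⦄, v ∈ F → φ (u ⊔ v) + φ (u ⊓ v) ≤ φ u + φ v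

theorem IsSubmodularOn.dual {F : Set α} {φ : α → ℝ} (hφ : IsSubmodularOn F φ) :
    IsSubmodularOn (ofDual ⁻¹' F) (φ ∘ ofDual) := fun _ hu _ hv =>
  (add_comm _ _).trans_le (hφ hu hv)

noncomputable def lowerInf (F : Set α) (φ : α → ℝ) (x : α) : ℝ :=
  sInf (φ '' {y | y ∈ F ∧ y ≤ x})

noncomputable def upperInf (F : Set α) (φ : α → ℝ) (x : α) : ℝ :=
  sInf (φ '' {y | y ∈ F ∧ x ≤ y})

theorem upperInf_eq_lowerInf_dual (F : Set α) (φ : α → ℝ) (x : α) :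
    upperInf F φ x = lowerInf (ofDual ⁻¹' F) (φ ∘ ofDual) (toDual x) :=
  rfl

theorem le_csInf_add_csInf {S T : Set ℝ} {c : ℝ} (hS : S.Nonempty) (hT : T.Nonempty)
    (h : ∀ a ∈ S, ∀ b ∈ T, c ≤ a + b) : c ≤ sInf S + sInf T := by
  obtain ⟨a₀, ha₀⟩ := hS
  obtain ⟨b₀, hb₀⟩ := hT
  have hS' : BddBelow S := ⟨c - b₀, fun a ha => by linarith [h a ha b₀ hb₀]⟩
  have hT' : BddBelow T := ⟨c - a₀, fun b hb => by linarith [h a₀ ha₀ b hb]⟩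
  rw [← csInf_add ⟨a₀, ha₀⟩ hS' ⟨b₀, hb₀⟩ hT']
  refine le_csInf ⟨_, add_mem_add ha₀ hb₀⟩ ?_
  rintro _ ⟨a, ha, b, hb, rfl⟩
  exact h a ha b hb

theorem isSubmodularOn_univ_lowerInf {F : Set α} {φ : α → ℝ} (hsup : SupClosed F)
    (hinf : InfClosed F) (hφ : IsSubmodularOn F φ) (hbdd : BddBelow (φ '' F))
    (hne : ∀ x, ∃ y ∈ F, y ≤ x) : IsSubmodularOn univ (lowerInf F φ) := by
  have lowerInf_le {x y : α} (hy : y ∈ F) (hyx : y ≤ x) : lowerInf F φ x ≤ φ y :=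
    csInf_le (hbdd.mono (image_mono fun _ h => h.1)) ⟨y, ⟨hy, hyx⟩, rfl⟩
  have image_nonempty (x : α) : (φ '' {y | y ∈ F ∧ y ≤ x}).Nonempty :=
    let ⟨y, hy, hyx⟩ := hne x; ⟨φ y, y, ⟨hy, hyx⟩, rfl⟩
  intro x _ y _
  refine le_csInf_add_csInf (image_nonempty x) (image_nonempty y) ?_
  rintro _ ⟨a, ⟨ha, hax⟩, rfl⟩ _ ⟨b, ⟨hb, hby⟩, rfl⟩
  calc lowerInf F φ (x ⊔ y) + lowerInf F φ (x ⊓ y) ≤ φ (a ⊔ b) + φ (a ⊓ b) :=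
        add_le_add (lowerInf_le (hsup ha hb) (sup_le_sup hax hby))
          (lowerInf_le (hinf ha hb) (inf_le_inf hax hby))
    _ ≤ φ a + φ b := hφ ha hb

theorem isSubmodularOn_univ_upperInf {F : Set α} {φ : α → ℝ} (hsup : SupClosed F)
    (hinf : InfClosed F) (hφ : IsSubmodularOn F φ) (hbdd : BddBelow (φ '' F))
    (hne : ∀ x, ∃ y ∈ F, x ≤ y) : IsSubmodularOn univ (upperInf F φ) := by
  intro x _ y _
  simp only [upperInf_eq_lowerInf_dual]
  exact (add_comm _ _).trans_le <| isSubmodularOn_univ_lowerInf (F := ofDual ⁻¹' F) hinf hsup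
    hφ.dual hbdd hne (mem_univ (toDual x)) (mem_univ (toDual y))

end

theorem stmt_4 {J : Type*} (F : Set (Set J))
    (hempty : ∅ ∈ F) (huniv : Set.univ ∈ F)
    (hunion : ∀ A ∈ F, ∀ C ∈ F, A ∪ C ∈ F)
    (hinter : ∀ A ∈ F, ∀ C ∈ F, A ∩ C ∈ F)
    (φ : Set J → ℝ)
    (hbdd : ∃ M : ℝ, ∀ A ∈ F, |φ A| ≤ M)
    (hsub : ∀ U ∈ F, ∀ V ∈ F, φ (U ∪ V) + φ (U ∩ V) ≤ φ U + φ V)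
    (li ui : Set J → ℝ)
    (hli : ∀ X : Set J, li X = sInf {r | ∃ Y ∈ F, Y ⊆ X ∧ r = φ Y})
    (hui : ∀ X : Set J, ui X = sInf {r | ∃ Y ∈ F, X ⊆ Y ∧ r = φ Y}) :
    (∀ X Y : Set J, li (X ∪ Y) + li (X ∩ Y) ≤ li X + li Y) ∧
    (∀ X Y : Set J, ui (X ∪ Y) + ui (X ∩ Y) ≤ ui X + ui Y) := by
  obtain ⟨M, hM⟩ := hbdd
  have hφ_bdd : BddBelow (φ '' F) := ⟨-M, by
    rintro _ ⟨A, hA, rfl⟩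
    exact (abs_le.mp (hM A hA)).1⟩
  have hli' : li = lowerInf F φ := by
    ext X; simp only [hli, lowerInf, image, mem_ofPred_eq, eq_comm, and_assoc]
  have hui' : ui = upperInf F φ := by
    ext X; simp only [hui, upperInf, image, mem_ofPred_eq, eq_comm, and_assoc]
  subst hli' hui'
  exact ⟨fun X Y => isSubmodularOn_univ_lowerInf hunion hinter hsub hφ_bdd
      (fun X => ⟨∅, hempty, empty_subset X⟩) (mem_univ X) (mem_univ Y),
    fun X Y => isSubmodularOn_univ_upperInf hunion hinter hsub hφ_bdd
      (fun X => ⟨univ, huniv, subset_univ X⟩) (mem_univ X) (mem_univ Y)⟩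
end

section
/- Let φ : B → ℝ be a submodular setfunction on a set-algebra (J, B) and μ : B → ℝ a modular setfunction (φ and μ nonnegative). Then the setfunction (φ ∧ μ)(X) = inf{φ(Y) + μ(X \ Y) : Y ∈ B, Y ⊆ X} is submodular; moreover, if φ and μ are increasing, then φ ∧ μ is increasing. -/
/-!
Given `A ≤ X` and `C ≤ Y` in `B`, the sets `A ⊔ C ≤ X ⊔ Y` and `A ⊓ C ≤ X ⊓ Y` are admissible
in the infima defining `(φ ∧ μ)(X ⊔ Y)` and `(φ ∧ μ)(X ⊓ Y)`. Submodularity of `φ` handles the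
`φ`-terms, and modularity of `μ` gives the exact identity
`μ((X ⊔ Y) \ (A ⊔ C)) + μ((X ⊓ Y) \ (A ⊓ C)) = μ(X \ A) + μ(Y \ C)`; taking infima over `A` and
`C` yields submodularity. For monotonicity, a witness `A ≤ Y` for `Y` is replaced by `A ⊓ X ≤ X`,
which can only decrease both terms.
-/

section InfConvolution

variable {α : Type*} [GeneralizedBooleanAlgebra α]

/-- The set function `φ ∧ μ` on the set system `B`. -/
noncomputable def infConvolution (B : Set α) (φ μ : α → ℝ) (X : α) : ℝ :=
  sInf {r | ∃ Y ∈ B, Y ≤ X ∧ r = φ Y + μ (X \ Y)}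

variable {B : Set α} {φ μ : α → ℝ}

theorem modular_add_sdiff (hdiff : ∀ A ∈ B, ∀ C ∈ B, A \ C ∈ B)
    (hmod : ∀ X ∈ B, ∀ Y ∈ B, μ (X ⊔ Y) + μ (X ⊓ Y) = μ X + μ Y)
    {S T : α} (hS : S ∈ B) (hT : T ∈ B) (hTS : T ≤ S) :
    μ T + μ (S \ T) = μ S + μ ⊥ := by
  have h := hmod T hT (S \ T) (hdiff S hS T hT)
  rw [sup_sdiff_cancel_right hTS, inf_sdiff_self_right] at h
  linarith

theorem modular_sdiff_sup_add_sdiff_inf (hunion : ∀ A ∈ B, ∀ C ∈ B, A ⊔ C ∈ B)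
    (hinter : ∀ A ∈ B, ∀ C ∈ B, A ⊓ C ∈ B) (hdiff : ∀ A ∈ B, ∀ C ∈ B, A \ C ∈ B)
    (hmod : ∀ X ∈ B, ∀ Y ∈ B, μ (X ⊔ Y) + μ (X ⊓ Y) = μ X + μ Y)
    {X Y A C : α} (hX : X ∈ B) (hY : Y ∈ B) (hA : A ∈ B) (hC : C ∈ B)
    (hAX : A ≤ X) (hCY : C ≤ Y) :
    μ ((X ⊔ Y) \ (A ⊔ C)) + μ ((X ⊓ Y) \ (A ⊓ C)) = μ (X \ A) + μ (Y \ C) := by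
  have hsup := modular_add_sdiff hdiff hmod (hunion X hX Y hY) (hunion A hA C hC)
    (sup_le_sup hAX hCY)
  have hinf := modular_add_sdiff hdiff hmod (hinter X hX Y hY) (hinter A hA C hC)
    (inf_le_inf hAX hCY)
  have hXA := modular_add_sdiff hdiff hmod hX hA hAX
  have hYC := modular_add_sdiff hdiff hmod hY hC hCY
  linarith [hmod A hA C hC, hmod X hX Y hY]

theorem infConvolution_le (hdiff : ∀ A ∈ B, ∀ C ∈ B, A \ C ∈ B)
    (hφ : ∀ X ∈ B, 0 ≤ φ X) (hμ : ∀ X ∈ B, 0 ≤ μ X)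
    {X Y : α} (hX : X ∈ B) (hY : Y ∈ B) (hYX : Y ≤ X) :
    infConvolution B φ μ X ≤ φ Y + μ (X \ Y) := by
  refine csInf_le ⟨0, ?_⟩ ⟨Y, hY, hYX, rfl⟩
  rintro r ⟨Z, hZ, -, rfl⟩
  exact add_nonneg (hφ Z hZ) (hμ _ (hdiff X hX Z hZ))

theorem le_infConvolution {X : α} (hX : X ∈ B) {c : ℝ}
    (h : ∀ Y ∈ B, Y ≤ X → c ≤ φ Y + μ (X \ Y)) : c ≤ infConvolution B φ μ X := by
  refine le_csInf ⟨_, X, hX, le_rfl, rfl⟩ ?_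
  rintro r ⟨Y, hY, hYX, rfl⟩
  exact h Y hY hYX

theorem infConvolution_submodular (hunion : ∀ A ∈ B, ∀ C ∈ B, A ⊔ C ∈ B)
    (hinter : ∀ A ∈ B, ∀ C ∈ B, A ⊓ C ∈ B) (hdiff : ∀ A ∈ B, ∀ C ∈ B, A \ C ∈ B)
    (hφ : ∀ X ∈ B, 0 ≤ φ X) (hμ : ∀ X ∈ B, 0 ≤ μ X)
    (hsub : ∀ X ∈ B, ∀ Y ∈ B, φ (X ⊔ Y) + φ (X ⊓ Y) ≤ φ X + φ Y)
    (hmod : ∀ X ∈ B, ∀ Y ∈ B, μ (X ⊔ Y) + μ (X ⊓ Y) = μ X + μ Y)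
    {X Y : α} (hX : X ∈ B) (hY : Y ∈ B) :
    infConvolution B φ μ (X ⊔ Y) + infConvolution B φ μ (X ⊓ Y) ≤
      infConvolution B φ μ X + infConvolution B φ μ Y := by
  have hwitness : ∀ A ∈ B, A ≤ X → ∀ C ∈ B, C ≤ Y →
      infConvolution B φ μ (X ⊔ Y) + infConvolution B φ μ (X ⊓ Y) ≤
        (φ A + μ (X \ A)) + (φ C + μ (Y \ C)) := by
    intro A hA hAX C hC hCY
    have hsup := infConvolution_le hdiff hφ hμ (hunion X hX Y hY) (hunion A hA C hC)
      (sup_le_sup hAX hCY)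
    have hinf := infConvolution_le hdiff hφ hμ (hinter X hX Y hY) (hinter A hA C hC)
      (inf_le_inf hAX hCY)
    linarith [hsub A hA C hC,
      modular_sdiff_sup_add_sdiff_inf hunion hinter hdiff hmod hX hY hA hC hAX hCY]
  rw [← sub_le_iff_le_add]
  refine le_infConvolution hX fun A hA hAX => ?_
  rw [sub_le_comm]
  refine le_infConvolution hY fun C hC hCY => ?_
  linarith [hwitness A hA hAX C hC hCY]

theorem infConvolution_mono (hinter : ∀ A ∈ B, ∀ C ∈ B, A ⊓ C ∈ B)
    (hdiff : ∀ A ∈ B, ∀ C ∈ B, A \ C ∈ B)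
    (hφ : ∀ X ∈ B, 0 ≤ φ X) (hμ : ∀ X ∈ B, 0 ≤ μ X)
    (hφmono : ∀ X ∈ B, ∀ Y ∈ B, X ≤ Y → φ X ≤ φ Y)
    (hμmono : ∀ X ∈ B, ∀ Y ∈ B, X ≤ Y → μ X ≤ μ Y)
    {X Y : α} (hX : X ∈ B) (hY : Y ∈ B) (hXY : X ≤ Y) :
    infConvolution B φ μ X ≤ infConvolution B φ μ Y := by
  refine le_infConvolution hY fun A hA _ => ?_
  have hAX := hinter A hA X hX
  calc infConvolution B φ μ X ≤ φ (A ⊓ X) + μ (X \ (A ⊓ X)) :=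
        infConvolution_le hdiff hφ hμ hX hAX inf_le_right
    _ = φ (A ⊓ X) + μ (X \ A) := by rw [sdiff_inf_self_right]
    _ ≤ φ A + μ (Y \ A) := add_le_add (hφmono _ hAX A hA inf_le_left)
        (hμmono _ (hdiff X hX A hA) _ (hdiff Y hY A hA) (sdiff_le_sdiff_right hXY))

end InfConvolution

theorem stmt_5_general {J : Type*} (B : Set (Set J))
    (hcompl : ∀ A ∈ B, Aᶜ ∈ B)
    (hunion : ∀ A ∈ B, ∀ C ∈ B, A ∪ C ∈ B)
    (hinter : ∀ A ∈ B, ∀ C ∈ B, A ∩ C ∈ B)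
    (φ μ : Set J → ℝ)
    (hφpos : ∀ X ∈ B, 0 ≤ φ X) (hμpos : ∀ X ∈ B, 0 ≤ μ X)
    (hsub : ∀ X ∈ B, ∀ Y ∈ B, φ (X ∪ Y) + φ (X ∩ Y) ≤ φ X + φ Y)
    (hmod : ∀ X ∈ B, ∀ Y ∈ B, μ (X ∪ Y) + μ (X ∩ Y) = μ X + μ Y)
    (meet : Set J → ℝ)
    (hmeet : ∀ X, meet X = sInf {r | ∃ Y ∈ B, Y ⊆ X ∧ r = φ Y + μ (X \ Y)}) :
    (∀ X ∈ B, ∀ Y ∈ B, meet (X ∪ Y) + meet (X ∩ Y) ≤ meet X + meet Y) ∧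
    ((∀ X ∈ B, ∀ Y ∈ B, X ⊆ Y → φ X ≤ φ Y) →
      (∀ X ∈ B, ∀ Y ∈ B, X ⊆ Y → μ X ≤ μ Y) →
      (∀ X ∈ B, ∀ Y ∈ B, X ⊆ Y → meet X ≤ meet Y)) := by
  have hdiff : ∀ A ∈ B, ∀ C ∈ B, A \ C ∈ B := fun A hA C hC => by
    simpa only [Set.sdiff_eq] using hinter A hA Cᶜ (hcompl C hC)
  obtain rfl : meet = infConvolution B φ μ := funext hmeet
  exact ⟨fun X hX Y hY =>
      infConvolution_submodular hunion hinter hdiff hφpos hμpos hsub hmod hX hY,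
    fun hφmono hμmono X hX Y hY hXY =>
      infConvolution_mono hinter hdiff hφpos hμpos hφmono hμmono hX hY hXY⟩

theorem stmt_5 {J : Type*} (B : Set (Set J))
    (hempty : ∅ ∈ B) (huniv : Set.univ ∈ B)
    (hcompl : ∀ A ∈ B, Aᶜ ∈ B)
    (hunion : ∀ A ∈ B, ∀ C ∈ B, A ∪ C ∈ B)
    (hinter : ∀ A ∈ B, ∀ C ∈ B, A ∩ C ∈ B)
    (φ μ : Set J → ℝ)
    (hφpos : ∀ X ∈ B, 0 ≤ φ X) (hμpos : ∀ X ∈ B, 0 ≤ μ X)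
    (hsub : ∀ X ∈ B, ∀ Y ∈ B, φ (X ∪ Y) + φ (X ∩ Y) ≤ φ X + φ Y)
    (hmod : ∀ X ∈ B, ∀ Y ∈ B, μ (X ∪ Y) + μ (X ∩ Y) = μ X + μ Y)
    (meet : Set J → ℝ)
    (hmeet : ∀ X, meet X = sInf {r | ∃ Y ∈ B, Y ⊆ X ∧ r = φ Y + μ (X \ Y)}) :
    (∀ X ∈ B, ∀ Y ∈ B, meet (X ∪ Y) + meet (X ∩ Y) ≤ meet X + meet Y) ∧
    ((∀ X ∈ B, ∀ Y ∈ B, X ⊆ Y → φ X ≤ φ Y) →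
      (∀ X ∈ B, ∀ Y ∈ B, X ⊆ Y → μ X ≤ μ Y) →
      (∀ X ∈ B, ∀ Y ∈ B, X ⊆ Y → meet X ≤ meet Y)) :=
  stmt_5_general B hcompl hunion hinter φ μ hφpos hμpos hsub hmod meet hmeet
end

section
/- Let E be a finite set and f : 2^E → ℝ be an increasing submodular setfunction with f(∅) < 0. Define f∘(U) = min over all partitions {X₁,…,Xₙ} of U into nonempty subsets of ∑ᵢ max(f(Xᵢ), 0), with f∘(∅) = 0. Then f∘ is submodular. (Dilworth truncation / positive part.) -/
/-! Write `g = max f 0` and `K = posPoints f` for the set of points `x` with `f {x} > 0`. Points outside `K` cost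
nothing as singleton blocks, while by monotonicity `f > 0` on every nonempty subset of `K`. Hence
the optimum for `U` is attained by singletons outside `K` together with a partition of `U ∩ K`, on
whose blocks `g = f`: up to intersecting with `K`, `fc` is the Dilworth truncation of `f`.

That truncation is submodular by uncrossing. Given partitions `P` of `a` and `Q` of `b`, insert
the blocks of `Q` one at a time; a block `y` absorbs, one after the other, the blocks `x` it
meets, becoming `x ⊔ y` and leaving `x ⊓ y` behind as a block of the partition of `a ⊓ b`.
Each such step costs nothing by `f (x ⊔ y) + f (x ⊓ y) ≤ f x + f y`. -/

open Finset

namespace Finpartition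

section IsModularLattice

variable {α : Type*} [Lattice α] [OrderBot α] [IsModularLattice α] [DecidableEq α] {a b c : α}

@[simps]
def union (P : Finpartition a) (Q : Finpartition b) (hab : Disjoint a b) (hc : a ⊔ b = c) :
    Finpartition c where
  parts := P.parts ∪ Q.parts
  supIndep := P.supIndep.union Q.supIndep (by rwa [P.sup_parts, Q.sup_parts])
  sup_parts := by rw [sup_union, P.sup_parts, Q.sup_parts, hc]
  bot_notMem h := (mem_union.1 h).elim P.bot_notMem Q.bot_notMem

lemma sum_union {M : Type*} [AddCommMonoid M] (P : Finpartition a) (Q : Finpartition b)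
    (hab : Disjoint a b) (hc : a ⊔ b = c) (f : α → M) :
    ∑ p ∈ (P.union Q hab hc).parts, f p = ∑ p ∈ P.parts, f p + ∑ q ∈ Q.parts, f q := by
  refine Finset.sum_union (disjoint_left.2 fun p hP hQ ↦ P.ne_bot hP ?_)
  exact (hab.mono (P.le hP) (Q.le hQ)).eq_bot_of_self

end IsModularLattice

section Uncrossing

variable {α : Type*} [DistribLattice α] [OrderBot α] [DecidableEq α] {f : α → ℝ}

theorem exists_uncross_insert (hf : ∀ x y, f (x ⊔ y) + f (x ⊓ y) ≤ f x + f y) {a b : α}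
    (P : Finpartition a) (hb : b ≠ ⊥) :
    ∃ (R : Finpartition (a ⊔ b)) (S : Finpartition (a ⊓ b)),
      ∑ r ∈ R.parts, f r + ∑ s ∈ S.parts, f s ≤ ∑ p ∈ P.parts, f p + f b := by
  obtain ⟨s, hs, rfl, hbot⟩ := P
  induction s using Finset.induction_on generalizing b with
  | empty =>
    exact ⟨(indiscrete hb).copy (by simp), (Finpartition.empty α).copy (by simp), by simp⟩
  | insert x t hx ih =>
    have hxt : Disjoint x (t.sup id) := hs (subset_insert x t) (mem_insert_self x t) hx
    have hx0 : x ≠ ⊥ := fun h ↦ hbot (h ▸ mem_insert_self x t)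
    have ht := hs.subset (subset_insert x t)
    have htbot : ⊥ ∉ t := fun h ↦ hbot (mem_insert_of_mem h)
    have hsup : (insert x t).sup id = x ⊔ t.sup id := sup_insert
    by_cases hxb : Disjoint x b
    · obtain ⟨R, S, hRS⟩ := ih hb ht htbot
      refine ⟨R.union (indiscrete hx0) (disjoint_sup_left.2 ⟨hxt.symm, hxb.symm⟩)
        (by rw [hsup]; ac_rfl),
        S.copy (by rw [hsup, inf_sup_right, hxb.eq_bot, bot_sup_eq]), ?_⟩
      dsimp only
      rw [sum_union, sum_insert hx]
      simp only [indiscrete_parts, sum_singleton, copy_parts]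
      linarith
    · obtain ⟨R, S, hRS⟩ := ih (b := x ⊔ b) (fun h ↦ hx0 (le_bot_iff.1 (h ▸ le_sup_left))) ht htbot
      have hxb0 : x ⊓ b ≠ ⊥ := fun h ↦ hxb (disjoint_iff.2 h)
      refine ⟨R.copy (by rw [hsup]; ac_rfl), S.union (indiscrete hxb0)
        (hxt.symm.mono inf_le_left inf_le_left)
        (by rw [hsup, inf_sup_left, hxt.symm.eq_bot, bot_sup_eq, ← inf_sup_right, sup_comm]), ?_⟩
      dsimp only
      rw [sum_union, sum_insert hx]
      simp only [indiscrete_parts, sum_singleton, copy_parts]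
      linarith [hf x b]

theorem exists_uncross (hf : ∀ x y, f (x ⊔ y) + f (x ⊓ y) ≤ f x + f y) {a b : α}
    (P : Finpartition a) (Q : Finpartition b) :
    ∃ (R : Finpartition (a ⊔ b)) (S : Finpartition (a ⊓ b)),
      ∑ r ∈ R.parts, f r + ∑ s ∈ S.parts, f s ≤ ∑ p ∈ P.parts, f p + ∑ q ∈ Q.parts, f q := by
  obtain ⟨s, hs, rfl, hbot⟩ := Q
  induction s using Finset.induction_on with
  | empty =>
    exact ⟨P.copy (by simp), (Finpartition.empty α).copy (by simp), by simp⟩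
  | insert y t hy ih =>
    have hyt : Disjoint y (t.sup id) := hs (subset_insert y t) (mem_insert_self y t) hy
    have hy0 : y ≠ ⊥ := fun h ↦ hbot (h ▸ mem_insert_self y t)
    obtain ⟨R, S, hRS⟩ := ih (hs.subset (subset_insert y t)) fun h ↦ hbot (mem_insert_of_mem h)
    obtain ⟨R', S', hRS'⟩ := exists_uncross_insert hf R hy0
    have hsup : (insert y t).sup id = y ⊔ t.sup id := sup_insert
    refine ⟨R'.copy (by rw [hsup]; ac_rfl), S.union (S'.copy (b := a ⊓ y) ?_) ?_ ?_, ?_⟩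
    · rw [inf_sup_right, hyt.symm.eq_bot, sup_bot_eq]
    · exact hyt.symm.mono inf_le_right inf_le_right
    · rw [hsup, inf_sup_left, sup_comm]
    dsimp only at hRS ⊢
    rw [sum_union, sum_insert hy]
    simp only [copy_parts]
    linarith

end Uncrossing

noncomputable def singletons {E : Type*} {W : Set E} (hW : W.Finite) : Finpartition W where
  parts := hW.toFinset.map ⟨({·}), Set.singleton_injective⟩
  supIndep := supIndep_iff_pairwiseDisjoint.2 <| by
    simp only [coe_map, Set.Finite.coe_toFinset]
    rintro _ ⟨x, -, rfl⟩ _ ⟨y, -, rfl⟩ hxy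
    exact Set.disjoint_singleton.2 fun h ↦ hxy (h ▸ rfl)
  sup_parts := by ext; simp [sup_set_eq_biUnion]
  bot_notMem := by simp

lemma mem_singletons_parts {E : Type*} {W : Set E} (hW : W.Finite) {A : Set E} :
    A ∈ (singletons hW).parts ↔ ∃ x ∈ W, {x} = A := by
  simp [singletons]

theorem exists_parts_eq_iff {E : Type*} {U : Set E} {s : Finset (Set E)} :
    (∃ P : Finpartition U, P.parts = s) ↔
      (∀ A ∈ s, A ≠ ∅) ∧ (s : Set (Set E)).PairwiseDisjoint id ∧ ⋃ A ∈ s, A = U := by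
  constructor
  · rintro ⟨P, rfl⟩
    exact ⟨fun A hA ↦ P.ne_bot hA, P.disjoint, by rw [← sup_set_eq_biUnion]; exact P.sup_parts⟩
  · rintro ⟨hne, hdisj, hU⟩
    exact ⟨⟨s, supIndep_iff_pairwiseDisjoint.2 hdisj, by rwa [sup_set_eq_biUnion],
      fun h ↦ hne ∅ h rfl⟩, rfl⟩

end Finpartition

theorem isLeast_range_sum_finpartition {E : Type*} {g fc : Set E → ℝ} (hfc0 : fc ∅ = 0)
    (hfc : ∀ U : Set E, U ≠ ∅ →
      IsLeast {r | ∃ P : Finset (Set E), (∀ A ∈ P, A ≠ ∅) ∧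
        (↑P : Set (Set E)).PairwiseDisjoint id ∧ (⋃ A ∈ P, A) = U ∧ r = ∑ A ∈ P, g A} (fc U))
    (U : Set E) :
    IsLeast (Set.range fun P : Finpartition U ↦ ∑ A ∈ P.parts, g A) (fc U) := by
  obtain rfl | hU := eq_or_ne U ∅
  · have hparts (P : Finpartition (∅ : Set E)) : P.parts = ∅ := P.parts_eq_empty_iff.2 rfl
    refine ⟨⟨Finpartition.empty _, by simp [hparts, hfc0]⟩, ?_⟩
    rintro _ ⟨P, rfl⟩
    simp [hparts, hfc0]
  · convert hfc U hU using 1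
    ext r
    constructor
    · rintro ⟨P, rfl⟩
      obtain ⟨hne, hdisj, hU⟩ := Finpartition.exists_parts_eq_iff.1 ⟨P, rfl⟩
      exact ⟨P.parts, hne, hdisj, hU, rfl⟩
    · rintro ⟨s, hne, hdisj, hU, rfl⟩
      obtain ⟨P, rfl⟩ := Finpartition.exists_parts_eq_iff.2 ⟨hne, hdisj, hU⟩
      exact ⟨P, rfl⟩

section PositivePart

variable {E : Type*} {f : Set E → ℝ}

def posPoints (f : Set E → ℝ) : Set E := {x | 0 < f {x}}

lemma pos_of_subset_posPoints (hf : Monotone f) {A : Set E} (hA : A ⊆ posPoints f)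
    (hne : A.Nonempty) : 0 < f A := by
  obtain ⟨x, hx⟩ := hne
  exact (hA hx).trans_le (hf (Set.singleton_subset_iff.2 hx))

lemma exists_finpartition_inter_posPoints (hf : Monotone f) (hf0 : f ∅ ≤ 0) {U : Set E}
    (P : Finpartition U) :
    ∃ P' : Finpartition (U ∩ posPoints f),
      ∑ p ∈ P'.parts, f p ≤ ∑ p ∈ P.parts, max (f p) 0 := by
  classical
  refine ⟨P.restrict Set.inter_subset_left, ?_⟩
  calc ∑ p ∈ (P.restrict _).parts, f p
      = ∑ p ∈ (P.restrict _).parts, max (f p) 0 := by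
        refine sum_congr rfl fun p hp ↦ (max_eq_left ?_).symm
        refine (pos_of_subset_posPoints hf ?_ ?_).le
        · exact ((P.restrict _).le hp).trans Set.inter_subset_right
        · exact Set.nonempty_iff_ne_empty.2 ((P.restrict _).ne_bot hp)
    _ = ∑ p ∈ P.parts, max (f (p ∩ (U ∩ posPoints f))) 0 :=
        P.sum_restrict _ _ (max_eq_right hf0)
    _ ≤ ∑ p ∈ P.parts, max (f p) 0 :=
        sum_le_sum fun p _ ↦ max_le_max_right 0 (hf Set.inter_subset_left)

lemma exists_finpartition_of_inter_posPoints [Finite E] (hf : Monotone f) {U : Set E}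
    (R : Finpartition (U ∩ posPoints f)) :
    ∃ R' : Finpartition U, ∑ r ∈ R'.parts, max (f r) 0 = ∑ r ∈ R.parts, f r := by
  classical
  set D := Finpartition.singletons (Set.toFinite (U \ posPoints f))
  refine ⟨R.union D Set.disjoint_sdiff_inter.symm (Set.inter_union_sdiff U _), ?_⟩
  rw [Finpartition.sum_union, sum_eq_zero (s := D.parts), add_zero]
  · refine sum_congr rfl fun r hr ↦ max_eq_left (pos_of_subset_posPoints hf ?_ ?_).le
    · exact (R.le hr).trans Set.inter_subset_right
    · exact Set.nonempty_iff_ne_empty.2 (R.ne_bot hr)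
  · intro A hA
    obtain ⟨x, hx, rfl⟩ := (Finpartition.mem_singletons_parts _).1 hA
    exact max_eq_right (not_lt.1 hx.2)

theorem submodular_of_isLeast_sum_finpartition [Finite E] (hf : Monotone f)
    (hsub : ∀ X Y : Set E, f (X ∪ Y) + f (X ∩ Y) ≤ f X + f Y) (hf0 : f ∅ ≤ 0) {fc : Set E → ℝ}
    (hfc : ∀ U : Set E,
      IsLeast (Set.range fun P : Finpartition U ↦ ∑ A ∈ P.parts, max (f A) 0) (fc U))
    (X Y : Set E) : fc (X ∪ Y) + fc (X ∩ Y) ≤ fc X + fc Y := by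
  classical
  obtain ⟨P, hP⟩ := (hfc X).1
  obtain ⟨Q, hQ⟩ := (hfc Y).1
  obtain ⟨P', hP'⟩ := exists_finpartition_inter_posPoints hf hf0 P
  obtain ⟨Q', hQ'⟩ := exists_finpartition_inter_posPoints hf hf0 Q
  obtain ⟨R, S, hRS⟩ := Finpartition.exists_uncross hsub P' Q'
  obtain ⟨R', hR'⟩ := exists_finpartition_of_inter_posPoints hf
    (R.copy (Set.union_inter_distrib_right X Y _).symm)
  obtain ⟨S', hS'⟩ := exists_finpartition_of_inter_posPoints hf
    (S.copy (Set.inter_inter_distrib_right X Y _).symm)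
  have hR'le := (hfc (X ∪ Y)).2 ⟨R', rfl⟩
  have hS'le := (hfc (X ∩ Y)).2 ⟨S', rfl⟩
  simp only [Finpartition.copy_parts] at hR' hS' hR'le hS'le
  linarith

end PositivePart

theorem stmt_8 {E : Type*} [Fintype E] (f : Set E → ℝ)
    (hmono : ∀ X Y : Set E, X ⊆ Y → f X ≤ f Y)
    (hsub : ∀ X Y : Set E, f (X ∪ Y) + f (X ∩ Y) ≤ f X + f Y)
    (hneg : f ∅ < 0)
    (fc : Set E → ℝ) (hfc0 : fc ∅ = 0)
    (hfc : ∀ U : Set E, U ≠ ∅ →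
      IsLeast {r | ∃ P : Finset (Set E), (∀ A ∈ P, A ≠ ∅) ∧
        (↑P : Set (Set E)).PairwiseDisjoint id ∧ (⋃ A ∈ P, A) = U ∧
        r = ∑ A ∈ P, max (f A) 0} (fc U)) :
    ∀ X Y : Set E, fc (X ∪ Y) + fc (X ∩ Y) ≤ fc X + fc Y :=
  submodular_of_isLeast_sum_finpartition (fun X Y h ↦ hmono X Y h) hsub hneg.le
    (isLeast_range_sum_finpartition hfc0 hfc)
end

section
/- Let φ be a setfunction with bounded variation on a set-algebra (J, B) with φ(∅) = 0, written as φ = φ₁ − φ₂ with φ₁, φ₂ increasing and φᵢ(∅)=0. Define the Choquet extension φ̂(f) for bounded measurable f via φ̂(f) = ∫_c^∞ φ{f ≥ t} dt + c·φ(J) for any c ≤ inf f. Then |φ̂(f) − φ̂(g)| ≤ var(φ) · ‖f − g‖_∞ for all bounded measurable f, g, where var(φ) is the total variation of φ. -/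
/-!
The variation `v X` of `φ` along chains ending at `X` satisfies `v X + |φ Y - φ X| ≤ v Y` for
`X ⊆ Y`, so `(v + φ) / 2` and `(v - φ) / 2` are increasing, vanish at `∅`, differ by `φ` and add
up to `var φ` on `J`: a Jordan decomposition with no loss in total mass. For an increasing `ψ` the
Choquet integral is monotone in `f` and satisfies `ψ̂ (g + M) = ψ̂ g + M ψ J` (shift the lower
limit `c` along with `g`), hence `|ψ̂ f - ψ̂ g| ≤ ψ J ‖f - g‖_∞`. Adding this for the two parts
gives the bound `var φ ‖f - g‖_∞`.
-/

open MeasureTheory Set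

section Variation

variable {J : Type*} [MeasurableSpace J] {φ : Set J → ℝ}

def chainSums (φ : Set J → ℝ) (Y : Set J) : Set ℝ :=
  {s | ∃ (n : ℕ) (X : ℕ → Set J),
      (∀ i ≤ n, MeasurableSet (X i)) ∧ X 0 = ∅ ∧ X n = Y ∧
      (∀ i < n, X i ⊆ X (i + 1)) ∧
      s = ∑ i ∈ Finset.range n, |φ (X (i + 1)) - φ (X i)|}

noncomputable def variation (φ : Set J → ℝ) (Y : Set J) : ℝ :=
  sSup (chainSums φ Y)

lemma chainSums_empty (φ : Set J → ℝ) : chainSums φ ∅ = {0} := by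
  ext s
  constructor
  · rintro ⟨n, X, -, -, hXn, hXmono, rfl⟩
    have hX : ∀ i ≤ n, X i = ∅ := fun i hi =>
      Nat.decreasingInduction (motive := fun i _ => X i = ∅)
        (fun k hk ih => subset_empty_iff.mp (ih ▸ hXmono k hk)) hXn hi
    refine Finset.sum_eq_zero fun i hi => ?_
    rw [hX i (Finset.mem_range.mp hi).le, hX (i + 1) (Finset.mem_range.mp hi), sub_self,
      abs_zero]
  · rintro rfl
    exact ⟨0, fun _ => ∅, by simp, rfl, rfl, by simp, by simp⟩

lemma variation_empty (φ : Set J → ℝ) : variation φ ∅ = 0 := by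
  rw [variation, chainSums_empty, csSup_singleton]

lemma add_abs_sub_mem_chainSums {X Y : Set J} (hY : MeasurableSet Y) (hXY : X ⊆ Y) {s : ℝ}
    (hs : s ∈ chainSums φ X) : s + |φ Y - φ X| ∈ chainSums φ Y := by
  obtain ⟨n, C, hC, hC0, rfl, hCmono, rfl⟩ := hs
  set C' : ℕ → Set J := fun i => if i ≤ n then C i else Y
  have hC'le : ∀ i ≤ n, C' i = C i := fun i hi => if_pos hi
  have hC'succ : C' (n + 1) = Y := if_neg (by omega)
  refine ⟨n + 1, C', fun i _ => ?_, by simp [C', hC0], hC'succ, fun i hi => ?_, ?_⟩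
  · simp only [C']
    split_ifs with h
    exacts [hC i h, hY]
  · rcases Nat.lt_succ_iff_lt_or_eq.mp hi with hi | rfl
    · rw [hC'le i hi.le, hC'le (i + 1) hi]
      exact hCmono i hi
    · rw [hC'le i le_rfl, hC'succ]
      exact hXY
  · rw [Finset.sum_range_succ, hC'succ, hC'le n le_rfl]
    congr 1
    refine Finset.sum_congr rfl fun i hi => ?_
    rw [hC'le i (Finset.mem_range.mp hi).le, hC'le (i + 1) (Finset.mem_range.mp hi)]

lemma chainSums_nonempty {Y : Set J} (hY : MeasurableSet Y) : (chainSums φ Y).Nonempty :=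
  ⟨_, add_abs_sub_mem_chainSums hY (empty_subset Y) (s := 0) (by simp [chainSums_empty])⟩

lemma chainSums_bddAbove (hφ : BddAbove (chainSums φ univ)) (Y : Set J) :
    BddAbove (chainSums φ Y) := by
  obtain ⟨V, hV⟩ := hφ
  refine ⟨V, fun s hs => ?_⟩
  have := hV (add_abs_sub_mem_chainSums MeasurableSet.univ (subset_univ Y) hs)
  linarith [abs_nonneg (φ univ - φ Y)]

lemma variation_add_abs_sub_le (hφ : BddAbove (chainSums φ univ)) {X Y : Set J}
    (hX : MeasurableSet X) (hY : MeasurableSet Y) (hXY : X ⊆ Y) :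
    variation φ X + |φ Y - φ X| ≤ variation φ Y := by
  rw [← le_sub_iff_add_le]
  refine csSup_le (chainSums_nonempty hX) fun s hs => le_sub_iff_add_le.mpr ?_
  exact le_csSup (chainSums_bddAbove hφ Y) (add_abs_sub_mem_chainSums hY hXY hs)

end Variation

section Jordan

variable {J : Type*} [MeasurableSpace J] {φ : Set J → ℝ}

noncomputable def posVariation (φ : Set J → ℝ) (X : Set J) : ℝ := (variation φ X + φ X) / 2

noncomputable def negVariation (φ : Set J → ℝ) (X : Set J) : ℝ := (variation φ X - φ X) / 2

lemma posVariation_sub_negVariation (φ : Set J → ℝ) : posVariation φ - negVariation φ = φ := by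
  ext X
  simp only [Pi.sub_apply, posVariation, negVariation]
  ring

lemma posVariation_add_negVariation (φ : Set J → ℝ) (X : Set J) :
    posVariation φ X + negVariation φ X = variation φ X := by
  simp only [posVariation, negVariation]
  ring

lemma posVariation_empty (h0 : φ ∅ = 0) : posVariation φ ∅ = 0 := by
  simp [posVariation, variation_empty, h0]

lemma negVariation_empty (h0 : φ ∅ = 0) : negVariation φ ∅ = 0 := by
  simp [negVariation, variation_empty, h0]

lemma monotoneOn_posVariation (hφ : BddAbove (chainSums φ univ)) :
    MonotoneOn (posVariation φ) {X | MeasurableSet X} := fun X hX Y hY hXY => by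
  have := variation_add_abs_sub_le hφ hX hY hXY
  simp only [posVariation]
  linarith [neg_abs_le (φ Y - φ X)]

lemma monotoneOn_negVariation (hφ : BddAbove (chainSums φ univ)) :
    MonotoneOn (negVariation φ) {X | MeasurableSet X} := fun X hX Y hY hXY => by
  have := variation_add_abs_sub_le hφ hX hY hXY
  simp only [negVariation]
  linarith [le_abs_self (φ Y - φ X)]

end Jordan

section Choquet

variable {J : Type*} {ψ : Set J → ℝ} {f g : J → ℝ}

noncomputable def choquetIntegral (ψ : Set J → ℝ) (f : J → ℝ) (c : ℝ) : ℝ :=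
  (∫ t in Ioi c, ψ {x | t ≤ f x}) + c * ψ univ

lemma choquetIntegral_add_const (ψ : Set J → ℝ) (g : J → ℝ) (c M : ℝ) :
    choquetIntegral ψ (fun x => g x + M) (c + M) = choquetIntegral ψ g c + M * ψ univ := by
  have hshift := (measurePreserving_add_right volume M).setIntegral_image_emb
    (measurableEmbedding_addRight M) (fun t => ψ {x | t ≤ g x + M}) (Ioi c)
  simp only [image_add_const_Ioi, add_le_add_iff_right] at hshift
  rw [choquetIntegral, choquetIntegral, hshift]
  ring

lemma choquetIntegral_sub (ψ₁ ψ₂ : Set J → ℝ) (c : ℝ)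
    (h₁ : IntegrableOn (fun t => ψ₁ {x | t ≤ f x}) (Ioi c))
    (h₂ : IntegrableOn (fun t => ψ₂ {x | t ≤ f x}) (Ioi c)) :
    choquetIntegral (ψ₁ - ψ₂) f c = choquetIntegral ψ₁ f c - choquetIntegral ψ₂ f c := by
  simp only [choquetIntegral, Pi.sub_apply, integral_sub h₁ h₂]
  ring

variable [MeasurableSpace J]

lemma antitone_superlevel (hψ : MonotoneOn ψ {X | MeasurableSet X}) (hf : Measurable f) :
    Antitone fun t => ψ {x | t ≤ f x} := fun _ _ hts =>
  hψ (measurableSet_le measurable_const hf) (measurableSet_le measurable_const hf)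
    fun _ hx => hts.trans hx

lemma integrableOn_Ioi_superlevel (hψ : MonotoneOn ψ {X | MeasurableSet X}) (hψ0 : ψ ∅ = 0)
    (hf : Measurable f) (hfb : BddAbove (range f)) (a : ℝ) :
    IntegrableOn (fun t => ψ {x | t ≤ f x}) (Ioi a) := by
  obtain ⟨K, hK⟩ := hfb
  refine IntegrableOn.of_forall_sdiff_eq_zero (s := Ioc a K) ?_ measurableSet_Ioi fun t ht => ?_
  · exact ((antitone_superlevel hψ hf).locallyIntegrable.integrableOn_isCompact
      isCompact_Icc).mono_set (Ioc_subset_Icc_self (a := a) (b := K))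
  · have hKt : K < t := (by simpa using ht : a < t ∧ K < t).2
    have : {x | t ≤ f x} = ∅ :=
      eq_empty_of_forall_notMem fun x hx => (hKt.trans_le hx).not_ge (hK (mem_range_self x))
    rw [this, hψ0]

lemma choquetIntegral_eq_of_forall_le (hψ : MonotoneOn ψ {X | MeasurableSet X}) (hψ0 : ψ ∅ = 0)
    (hf : Measurable f) (hfb : BddAbove (range f)) {c₁ c₂ : ℝ} (h₁ : ∀ x, c₁ ≤ f x)
    (h₂ : ∀ x, c₂ ≤ f x) : choquetIntegral ψ f c₁ = choquetIntegral ψ f c₂ := by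
  wlog hc : c₁ ≤ c₂ generalizing c₁ c₂
  · exact (this h₂ h₁ (le_of_not_ge hc)).symm
  have hint := integrableOn_Ioi_superlevel hψ hψ0 hf hfb
  have hIoc : ∫ t in Ioc c₁ c₂, ψ {x | t ≤ f x} = (c₂ - c₁) * ψ univ := by
    rw [setIntegral_congr_fun (f := fun t => ψ {x | t ≤ f x}) (g := fun _ => ψ univ)
      measurableSet_Ioc fun t ht =>
      congrArg ψ (eq_univ_of_forall fun x => ht.2.trans (h₂ x)), setIntegral_const,
      Real.volume_real_Ioc_of_le hc, smul_eq_mul]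
  rw [choquetIntegral, choquetIntegral, ← Ioc_union_Ioi_eq_Ioi hc,
    setIntegral_union Ioc_disjoint_Ioi_same measurableSet_Ioi
      ((hint c₁).mono_set Ioc_subset_Ioi_self) (hint c₂), hIoc]
  ring

lemma choquetIntegral_mono (hψ : MonotoneOn ψ {X | MeasurableSet X}) (hψ0 : ψ ∅ = 0)
    (hf : Measurable f) (hg : Measurable g) (hgb : BddAbove (range g)) (hfg : f ≤ g) (c : ℝ) :
    choquetIntegral ψ f c ≤ choquetIntegral ψ g c := by
  obtain ⟨K, hK⟩ := hgb
  have hfb : BddAbove (range f) :=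
    ⟨K, forall_mem_range.2 fun x => (hfg x).trans (hK (mem_range_self x))⟩
  refine add_le_add_left (setIntegral_mono (integrableOn_Ioi_superlevel hψ hψ0 hf hfb c)
    (integrableOn_Ioi_superlevel hψ hψ0 hg ⟨K, hK⟩ c) fun t => ?_) _
  exact hψ (measurableSet_le measurable_const hf) (measurableSet_le measurable_const hg)
    fun x hx => le_trans hx (hfg x)

lemma choquetIntegral_le_add (hψ : MonotoneOn ψ {X | MeasurableSet X}) (hψ0 : ψ ∅ = 0)
    (hf : Measurable f) (hg : Measurable g) (hgb : BddAbove (range g)) {c M : ℝ}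
    (hcf : ∀ x, c ≤ f x) (hcg : ∀ x, c ≤ g x) (hfg : ∀ x, f x ≤ g x + M) :
    choquetIntegral ψ f c ≤ choquetIntegral ψ g c + M * ψ univ := by
  have hgM : Measurable fun x => g x + M := hg.add_const M
  have hgMb : BddAbove (range fun x => g x + M) := by
    obtain ⟨K, hK⟩ := hgb
    exact ⟨K + M, forall_mem_range.2 fun x => by simpa using hK (mem_range_self x)⟩
  calc choquetIntegral ψ f c ≤ choquetIntegral ψ (fun x => g x + M) c :=
        choquetIntegral_mono hψ hψ0 hf hgM hgMb hfg c
    _ = choquetIntegral ψ (fun x => g x + M) (c + M) :=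
        choquetIntegral_eq_of_forall_le hψ hψ0 hgM hgMb (fun x => (hcf x).trans (hfg x))
          fun x => by simpa using hcg x
    _ = choquetIntegral ψ g c + M * ψ univ := choquetIntegral_add_const ψ g c M

lemma abs_choquetIntegral_sub_le (hψ : MonotoneOn ψ {X | MeasurableSet X}) (hψ0 : ψ ∅ = 0)
    (hf : Measurable f) (hg : Measurable g) (hfb : BddAbove (range f))
    (hgb : BddAbove (range g)) {c M : ℝ} (hcf : ∀ x, c ≤ f x) (hcg : ∀ x, c ≤ g x)
    (hM : ∀ x, |f x - g x| ≤ M) :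
    |choquetIntegral ψ f c - choquetIntegral ψ g c| ≤ M * ψ univ := by
  rw [abs_sub_le_iff, sub_le_iff_le_add', sub_le_iff_le_add']
  exact ⟨choquetIntegral_le_add hψ hψ0 hf hg hgb hcf hcg fun x => by
      linarith [(abs_le.mp (hM x)).2],
    choquetIntegral_le_add hψ hψ0 hg hf hfb hcg hcf fun x => by
      linarith [(abs_le.mp (hM x)).1]⟩

end Choquet

section Lipschitz

variable {J : Type*} [MeasurableSpace J] {φ : Set J → ℝ} {f g : J → ℝ}

lemma choquetIntegral_eq_posVariation_sub_negVariation (h0 : φ ∅ = 0)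
    (hφ : BddAbove (chainSums φ univ)) (hf : Measurable f) (hfb : BddAbove (range f)) (c : ℝ) :
    choquetIntegral φ f c =
      choquetIntegral (posVariation φ) f c - choquetIntegral (negVariation φ) f c := by
  conv_lhs => rw [← posVariation_sub_negVariation φ]
  exact choquetIntegral_sub _ _ c
    (integrableOn_Ioi_superlevel (monotoneOn_posVariation hφ) (posVariation_empty h0) hf hfb c)
    (integrableOn_Ioi_superlevel (monotoneOn_negVariation hφ) (negVariation_empty h0) hf hfb c)

lemma abs_choquetIntegral_sub_le_variation (h0 : φ ∅ = 0) (hφ : BddAbove (chainSums φ univ))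
    (hf : Measurable f) (hg : Measurable g) (hfb : BddAbove (range f))
    (hgb : BddAbove (range g)) {c M : ℝ} (hcf : ∀ x, c ≤ f x) (hcg : ∀ x, c ≤ g x)
    (hM : ∀ x, |f x - g x| ≤ M) :
    |choquetIntegral φ f c - choquetIntegral φ g c| ≤ variation φ univ * M := by
  have hpos := abs_choquetIntegral_sub_le (monotoneOn_posVariation hφ) (posVariation_empty h0)
    hf hg hfb hgb hcf hcg hM
  have hneg := abs_choquetIntegral_sub_le (monotoneOn_negVariation hφ) (negVariation_empty h0)
    hf hg hfb hgb hcf hcg hM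
  rw [choquetIntegral_eq_posVariation_sub_negVariation h0 hφ hf hfb,
    choquetIntegral_eq_posVariation_sub_negVariation h0 hφ hg hgb,
    ← posVariation_add_negVariation]
  calc _ ≤ |choquetIntegral (posVariation φ) f c - choquetIntegral (posVariation φ) g c|
        + |choquetIntegral (negVariation φ) f c - choquetIntegral (negVariation φ) g c| := by
        rw [sub_sub_sub_comm]; exact abs_sub _ _
    _ ≤ _ := by linarith

end Lipschitz

open MeasureTheory in
theorem stmt_9_general {J : Type*} [MeasurableSpace J] (φ : Set J → ℝ)
    (h0 : φ ∅ = 0)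
    (V : ℝ)
    (hV : IsLUB {s | ∃ (n : ℕ) (X : ℕ → Set J),
        (∀ i ≤ n, MeasurableSet (X i)) ∧ X 0 = ∅ ∧ X n = Set.univ ∧
        (∀ i < n, X i ⊆ X (i + 1)) ∧
        s = ∑ i ∈ Finset.range n, |φ (X (i + 1)) - φ (X i)|} V)
    (hat : (J → ℝ) → ℝ)
    (hhat : ∀ (f : J → ℝ) (c : ℝ), (∀ x, c ≤ f x) →
      hat f = (∫ t in Set.Ioi c, φ {x | t ≤ f x}) + c * φ Set.univ)
    (f g : J → ℝ) (hf : Measurable f) (hg : Measurable g)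
    (hfb : ∃ M : ℝ, ∀ x, |f x| ≤ M) (hgb : ∃ M : ℝ, ∀ x, |g x| ≤ M)
    (M : ℝ) (hM : ∀ x, |f x - g x| ≤ M) :
    |hat f - hat g| ≤ V * M := by
  have hV' : IsLUB (chainSums φ univ) V := hV
  obtain ⟨Kf, hKf⟩ := hfb
  obtain ⟨Kg, hKg⟩ := hgb
  have hcf : ∀ x, min (-Kf) (-Kg) ≤ f x := fun x => (min_le_left _ _).trans (abs_le.mp (hKf x)).1
  have hcg : ∀ x, min (-Kf) (-Kg) ≤ g x := fun x => (min_le_right _ _).trans (abs_le.mp (hKg x)).1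
  rw [hhat f _ hcf, hhat g _ hcg, ← hV'.csSup_eq (chainSums_nonempty MeasurableSet.univ)]
  exact abs_choquetIntegral_sub_le_variation h0 hV'.bddAbove hf hg
    ⟨Kf, forall_mem_range.2 fun x => (abs_le.mp (hKf x)).2⟩
    ⟨Kg, forall_mem_range.2 fun x => (abs_le.mp (hKg x)).2⟩ hcf hcg hM

open MeasureTheory in
theorem stmt_9 {J : Type*} [MeasurableSpace J] (φ : Set J → ℝ)
    (h0 : φ ∅ = 0)
    (φ₁ φ₂ : Set J → ℝ)
    (h₁0 : φ₁ ∅ = 0) (h₂0 : φ₂ ∅ = 0)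
    (hφ₁mono : ∀ X Y : Set J, MeasurableSet X → MeasurableSet Y → X ⊆ Y → φ₁ X ≤ φ₁ Y)
    (hφ₂mono : ∀ X Y : Set J, MeasurableSet X → MeasurableSet Y → X ⊆ Y → φ₂ X ≤ φ₂ Y)
    (hdiff : ∀ X : Set J, MeasurableSet X → φ X = φ₁ X - φ₂ X)
    (V : ℝ)
    (hV : IsLUB {s | ∃ (n : ℕ) (X : ℕ → Set J),
        (∀ i ≤ n, MeasurableSet (X i)) ∧ X 0 = ∅ ∧ X n = Set.univ ∧
        (∀ i < n, X i ⊆ X (i + 1)) ∧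
        s = ∑ i ∈ Finset.range n, |φ (X (i + 1)) - φ (X i)|} V)
    (hat : (J → ℝ) → ℝ)
    (hhat : ∀ (f : J → ℝ) (c : ℝ), (∀ x, c ≤ f x) →
      hat f = (∫ t in Set.Ioi c, φ {x | t ≤ f x}) + c * φ Set.univ)
    (f g : J → ℝ) (hf : Measurable f) (hg : Measurable g)
    (hfb : ∃ M : ℝ, ∀ x, |f x| ≤ M) (hgb : ∃ M : ℝ, ∀ x, |g x| ≤ M)
    (M : ℝ) (hM : ∀ x, |f x - g x| ≤ M) :
    |hat f - hat g| ≤ V * M :=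
  stmt_9_general φ h0 V hV hat hhat f g hf hg hfb hgb M hM
end

section
/- Let φ be a bounded submodular setfunction on a sigma-algebra (J, B) with φ(∅) = 0, and f, g bounded measurable functions J → ℝ. Then φ̂(f ∨ g) + φ̂(f ∧ g) ≤ φ̂(f) + φ̂(g), where φ̂ is the Choquet integral and (f∨g)(x)=max(f(x),g(x)), (f∧g)(x)=min(f(x),g(x)). -/
/-!
Superlevel sets turn lattice operations into set operations:
`{f ∨ g ≥ t} = {f ≥ t} ∪ {g ≥ t}` and `{f ∧ g ≥ t} = {f ≥ t} ∩ {g ≥ t}`, so submodularity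
of `φ` is a pointwise inequality between the integrands, and integrating it gives the theorem.

The work is in integrability. Along a decreasing chain of measurable sets `S t`, let `m t` be
the supremum of `φ` over the measurable supersets of `S t`. Then `m` is monotone, and
submodularity makes `m t - φ (S t)` monotone too, so `t ↦ φ (S t)` is measurable.
For a superlevel chain it is moreover bounded, and it vanishes beyond an upper bound of the
function.
-/

open MeasureTheory

section SetFunction

variable {J : Type*} [MeasurableSpace J] {φ : Set J → ℝ}

noncomputable def outerSup (φ : Set J → ℝ) (S : Set J) : ℝ :=
  sSup (φ '' {A | MeasurableSet A ∧ S ⊆ A})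

variable {M : ℝ}

lemma bddAbove_image_measurable_supersets (hM : ∀ X, MeasurableSet X → φ X ≤ M) (S : Set J) :
    BddAbove (φ '' {A | MeasurableSet A ∧ S ⊆ A}) :=
  ⟨M, by rintro _ ⟨A, ⟨hA, -⟩, rfl⟩; exact hM A hA⟩

lemma le_outerSup (hM : ∀ X, MeasurableSet X → φ X ≤ M) {S A : Set J} (hA : MeasurableSet A)
    (hSA : S ⊆ A) : φ A ≤ outerSup φ S :=
  le_csSup (bddAbove_image_measurable_supersets hM S) ⟨A, ⟨hA, hSA⟩, rfl⟩

lemma outerSup_le {S : Set J} {r : ℝ} (h : ∀ A, MeasurableSet A → S ⊆ A → φ A ≤ r) :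
    outerSup φ S ≤ r :=
  csSup_le ⟨_, Set.univ, ⟨MeasurableSet.univ, Set.subset_univ S⟩, rfl⟩
    (by rintro _ ⟨A, ⟨hA, hSA⟩, rfl⟩; exact h A hA hSA)

lemma outerSup_anti (hM : ∀ X, MeasurableSet X → φ X ≤ M) {S T : Set J} (hST : S ⊆ T) :
    outerSup φ T ≤ outerSup φ S :=
  outerSup_le fun _ hA hTA => le_outerSup hM hA (hST.trans hTA)

variable (hsub : ∀ X Y : Set J, MeasurableSet X → MeasurableSet Y →
  φ (X ∪ Y) + φ (X ∩ Y) ≤ φ X + φ Y)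
include hsub

/-- Submodularity applied to `S` and `T ∪ (A \ S)`, whose union is `A` and intersection is `T`. -/
lemma le_sub_add_of_subset_of_subset {S T A : Set J} (hS : MeasurableSet S)
    (hT : MeasurableSet T) (hA : MeasurableSet A) (hTS : T ⊆ S) (hSA : S ⊆ A) :
    φ A ≤ φ S - φ T + φ (T ∪ (A \ S)) := by
  have hunion : S ∪ (T ∪ (A \ S)) = A := by
    rw [← Set.union_assoc, Set.union_eq_self_of_subset_right hTS, Set.union_sdiff_cancel hSA]
  have hinter : S ∩ (T ∪ (A \ S)) = T := by
    rw [Set.inter_union_distrib_left, Set.inter_sdiff_self, Set.union_empty,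
      Set.inter_eq_self_of_subset_right hTS]
  have := hsub S (T ∪ (A \ S)) hS (hT.union (hA.diff hS))
  rw [hunion, hinter] at this
  linarith

lemma outerSup_sub_le_outerSup_sub (hM : ∀ X, MeasurableSet X → φ X ≤ M) {S T : Set J}
    (hS : MeasurableSet S) (hT : MeasurableSet T) (hTS : T ⊆ S) :
    outerSup φ S - φ S ≤ outerSup φ T - φ T := by
  have : outerSup φ S ≤ φ S - φ T + outerSup φ T :=
    outerSup_le fun A hA hSA => (le_sub_add_of_subset_of_subset hsub hS hT hA hTS hSA).trans
      (add_le_add_right (le_outerSup hM (hT.union (hA.diff hS)) Set.subset_union_left) _)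
  linarith

theorem measurable_comp_of_antitone (hM : ∀ X, MeasurableSet X → φ X ≤ M) {S : ℝ → Set J}
    (hSm : ∀ t, MeasurableSet (S t)) (hS : Antitone S) : Measurable fun t => φ (S t) := by
  have houter : Monotone fun t => outerSup φ (S t) := fun _ _ hts => outerSup_anti hM (hS hts)
  have hgap : Monotone fun t => outerSup φ (S t) - φ (S t) := fun _ _ hts =>
    outerSup_sub_le_outerSup_sub hsub hM (hSm _) (hSm _) (hS hts)
  convert houter.measurable.sub hgap.measurable using 1
  exact funext fun t => (sub_sub_cancel _ _).symm

theorem integrableOn_Ioi_superlevel_s10 (h0 : φ ∅ = 0) (hM : ∀ X, MeasurableSet X → |φ X| ≤ M)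
    {F : J → ℝ} (hF : Measurable F) {b : ℝ} (hFb : ∀ x, F x ≤ b) (c : ℝ) :
    IntegrableOn (fun t => φ {x | t ≤ F x}) (Set.Ioi c) := by
  have hlevel : ∀ t, MeasurableSet {x | t ≤ F x} := fun t => measurableSet_le measurable_const hF
  have hmeas : Measurable fun t => φ {x | t ≤ F x} :=
    measurable_comp_of_antitone hsub (fun X hX => (abs_le.mp (hM X hX)).2) hlevel
      fun _ _ hts _ hx => hts.trans hx
  have hvanish : ∀ t ∈ Set.Ioi b, φ {x | t ≤ F x} = 0 := fun t ht => by
    have : {x | t ≤ F x} = ∅ :=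
      Set.eq_empty_of_forall_notMem fun x hx => (hx.trans (hFb x)).not_gt ht
    rw [this, h0]
  refine IntegrableOn.mono_set (IntegrableOn.union ?_ ?_) (Set.Ioi_subset_Ioc_union_Ioi (b := b))
  · exact Measure.integrableOn_of_bounded (M := M) measure_Ioc_lt_top.ne
      hmeas.aestronglyMeasurable (.of_forall fun t => hM _ (hlevel t))
  · exact (integrableOn_congr_fun hvanish measurableSet_Ioi).mpr integrableOn_zero

theorem integral_superlevel_max_add_min_le (h0 : φ ∅ = 0)
    (hM : ∀ X, MeasurableSet X → |φ X| ≤ M) {f g : J → ℝ} (hf : Measurable f)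
    (hg : Measurable g) {b : ℝ} (hfb : ∀ x, f x ≤ b) (hgb : ∀ x, g x ≤ b) (c : ℝ) :
    (∫ t in Set.Ioi c, φ {x | t ≤ max (f x) (g x)}) +
        ∫ t in Set.Ioi c, φ {x | t ≤ min (f x) (g x)} ≤
      (∫ t in Set.Ioi c, φ {x | t ≤ f x}) + ∫ t in Set.Ioi c, φ {x | t ≤ g x} := by
  have hint {F : J → ℝ} (hF : Measurable F) (hFb : ∀ x, F x ≤ b) :=
    integrableOn_Ioi_superlevel_s10 hsub h0 hM hF hFb c
  have Imax := hint (hf.max hg) fun x => max_le (hfb x) (hgb x)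
  have Imin := hint (hf.min hg) fun x => (min_le_left _ _).trans (hfb x)
  have If := hint hf hfb
  have Ig := hint hg hgb
  rw [← integral_add Imax Imin, ← integral_add If Ig]
  refine integral_mono (Imax.add Imin) (If.add Ig) fun t => ?_
  simp only [le_max_iff, le_min_iff, Set.ofPred_or, Set.ofPred_and]
  exact hsub _ _ (measurableSet_le measurable_const hf) (measurableSet_le measurable_const hg)

end SetFunction

open MeasureTheory in
theorem stmt_10 {J : Type*} [MeasurableSpace J] (φ : Set J → ℝ)
    (h0 : φ ∅ = 0)
    (hbdd : ∃ M : ℝ, ∀ X : Set J, MeasurableSet X → |φ X| ≤ M)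
    (hsub : ∀ X Y : Set J, MeasurableSet X → MeasurableSet Y →
      φ (X ∪ Y) + φ (X ∩ Y) ≤ φ X + φ Y)
    (hat : (J → ℝ) → ℝ)
    (hhat : ∀ (f : J → ℝ) (c : ℝ), (∀ x, c ≤ f x) →
      hat f = (∫ t in Set.Ioi c, φ {x | t ≤ f x}) + c * φ Set.univ)
    (f g : J → ℝ) (hf : Measurable f) (hg : Measurable g)
    (hfb : ∃ M : ℝ, ∀ x, |f x| ≤ M) (hgb : ∃ M : ℝ, ∀ x, |g x| ≤ M) :
    hat (fun x => max (f x) (g x)) + hat (fun x => min (f x) (g x)) ≤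
      hat f + hat g := by
  obtain ⟨M, hM⟩ := hbdd
  obtain ⟨Mf, hMf⟩ := hfb
  obtain ⟨Mg, hMg⟩ := hgb
  have hf_le (x) : f x ≤ max Mf Mg := (le_abs_self _).trans ((hMf x).trans (le_max_left _ _))
  have hg_le (x) : g x ≤ max Mf Mg := (le_abs_self _).trans ((hMg x).trans (le_max_right _ _))
  have hf_ge (x) : min (-Mf) (-Mg) ≤ f x := (min_le_left _ _).trans (neg_le_of_abs_le (hMf x))
  have hg_ge (x) : min (-Mf) (-Mg) ≤ g x := (min_le_right _ _).trans (neg_le_of_abs_le (hMg x))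
  rw [hhat f _ hf_ge, hhat g _ hg_ge, hhat _ _ fun x => (hf_ge x).trans (le_max_left _ _),
    hhat _ _ fun x => le_min (hf_ge x) (hg_ge x)]
  linarith [integral_superlevel_max_add_min_le hsub h0 hM hf hg hf_le hg_le (min (-Mf) (-Mg))]
end

section
/- Let E be a finite set and φ : 2^E → ℝ a submodular setfunction with φ(∅) = 0. For every maximal chain ∅ = S₀ ⊂ S₁ ⊂ … ⊂ Sₙ = E of subsets, there exists an additive setfunction α (i.e., α(X) = ∑_{x∈X} w(x) for some w : E → ℝ) with α ≤ φ pointwise and α(Sᵢ) = φ(Sᵢ) for all i. If φ is increasing, then α ≥ 0 (i.e., w ≥ 0). (Greedy algorithm / Corollary to Choquet's theorem, finite case.) -/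
/-!
Weight each element by its marginal gain `φ (Sᵢ₊₁) - φ (Sᵢ)` at the step where the chain picks it
up. The sums telescope along the chain, so `α (Sᵢ) = φ (Sᵢ)`. For `α ≤ φ`, induct along the chain:
if `X ⊆ Sᵢ₊₁ = insert x Sᵢ` contains `x`, submodularity (diminishing returns, since `X \ {x} ⊆ Sᵢ`)
bounds the weight of `x` by `φ X - φ (X \ {x})`. When `φ` is increasing every marginal gain is
nonnegative.
-/

open Finset

section Chain

variable {E : Type*} [DecidableEq E]

theorem marginal_le_of_subset {φ : Finset E → ℝ}
    (hsub : ∀ X Y : Finset E, φ (X ∪ Y) + φ (X ∩ Y) ≤ φ X + φ Y)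
    {A B : Finset E} (hAB : A ⊆ B) {x : E} (hx : x ∉ B) :
    φ (insert x B) - φ B ≤ φ (insert x A) - φ A := by
  have hunion : insert x A ∪ B = insert x B := by
    rw [insert_union, union_eq_right.2 hAB]
  have hinter : insert x A ∩ B = A := by
    rw [insert_inter_of_notMem hx, inter_eq_left.2 hAB]
  have := hsub (insert x A) B
  rw [hunion, hinter] at this
  linarith

variable {S : ℕ → Finset E} {n : ℕ}

theorem chain_subset (hstep : ∀ i < n, ∃ x ∉ S i, S (i + 1) = insert x (S i))
    {i j : ℕ} (hij : i ≤ j) (hjn : j ≤ n) : S i ⊆ S j := by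
  induction j, hij using Nat.le_induction with
  | base => rfl
  | succ k _ ih =>
    obtain ⟨x, -, hx⟩ := hstep k (by omega)
    rw [hx]
    exact (ih (by omega)).trans (subset_insert _ _)

theorem chain_entry_unique (hstep : ∀ i < n, ∃ x ∉ S i, S (i + 1) = insert x (S i))
    {x : E} {i j : ℕ} (hi : i < n) (hj : j < n)
    (hxi : x ∉ S i) (hxi' : x ∈ S (i + 1)) (hxj : x ∉ S j) (hxj' : x ∈ S (j + 1)) :
    i = j := by
  by_contra hne
  rcases Nat.lt_or_gt_of_ne hne with h | h
  · exact hxj (chain_subset hstep h hj.le hxi')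
  · exact hxi (chain_subset hstep h hi.le hxj')

theorem exists_chain_entry [Fintype E] (hS0 : S 0 = ∅) (hSn : S n = univ)
    (hstep : ∀ i < n, ∃ x ∉ S i, S (i + 1) = insert x (S i)) (x : E) :
    ∃ i < n, x ∉ S i ∧ S (i + 1) = insert x (S i) := by
  have hex : ∃ j, x ∈ S j := ⟨n, hSn ▸ mem_univ x⟩
  have hpos : Nat.find hex ≠ 0 := fun h => by simpa [h, hS0] using Nat.find_spec hex
  obtain ⟨i, hi⟩ : ∃ i, Nat.find hex = i + 1 := Nat.exists_eq_add_one_of_ne_zero hpos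
  have hin : i < n := by
    have := Nat.find_min' hex (hSn ▸ mem_univ x : x ∈ S n)
    omega
  have hxi : x ∉ S i := Nat.find_min hex (by omega)
  obtain ⟨y, -, hy⟩ := hstep i hin
  have hxy : x = y := by
    have := Nat.find_spec hex
    rw [hi, hy, mem_insert] at this
    exact this.resolve_right hxi
  exact ⟨i, hin, hxi, hxy ▸ hy⟩

variable {φ : Finset E → ℝ} {w : E → ℝ}
  (hw : ∀ i < n, ∀ x ∉ S i, S (i + 1) = insert x (S i) → w x = φ (S (i + 1)) - φ (S i))
include hw

theorem sum_chain_eq (h0 : φ ∅ = 0) (hS0 : S 0 = ∅)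
    (hstep : ∀ i < n, ∃ x ∉ S i, S (i + 1) = insert x (S i)) :
    ∀ i ≤ n, ∑ x ∈ S i, w x = φ (S i) := by
  intro i hi
  induction i with
  | zero => simp [hS0, h0]
  | succ k ih =>
    obtain ⟨x, hx, hxS⟩ := hstep k (by omega)
    rw [hxS, sum_insert hx, ih (by omega), ← hxS, hw k (by omega) x hx hxS]
    ring

theorem sum_le_of_subset_chain (h0 : φ ∅ = 0) (hS0 : S 0 = ∅)
    (hsub : ∀ X Y : Finset E, φ (X ∪ Y) + φ (X ∩ Y) ≤ φ X + φ Y)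
    (hstep : ∀ i < n, ∃ x ∉ S i, S (i + 1) = insert x (S i)) :
    ∀ i ≤ n, ∀ X ⊆ S i, ∑ x ∈ X, w x ≤ φ X := by
  intro i hi
  induction i with
  | zero =>
    intro X hX
    rw [hS0, subset_empty] at hX
    simp [hX, h0]
  | succ k ih =>
    intro X hX
    obtain ⟨x, hx, hxS⟩ := hstep k (by omega)
    have hX' : X.erase x ⊆ S k := subset_insert_iff.1 (hxS ▸ hX)
    by_cases hxX : x ∈ X
    · have hgain := marginal_le_of_subset hsub hX' hx
      rw [insert_erase hxX, ← hxS, ← hw k (by omega) x hx hxS] at hgain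
      rw [← add_sum_erase X w hxX]
      linarith [ih (by omega) _ hX']
    · exact ih (by omega) X (erase_eq_of_notMem hxX ▸ hX')

end Chain

theorem stmt_14 {E : Type*} [Fintype E] [DecidableEq E]
    (φ : Finset E → ℝ) (h0 : φ ∅ = 0)
    (hsub : ∀ X Y : Finset E, φ (X ∪ Y) + φ (X ∩ Y) ≤ φ X + φ Y)
    (n : ℕ) (S : ℕ → Finset E)
    (hS0 : S 0 = ∅) (hSn : S n = Finset.univ)
    (hstep : ∀ i < n, ∃ x ∉ S i, S (i + 1) = insert x (S i)) :
    ∃ w : E → ℝ,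
      (∀ X : Finset E, ∑ x ∈ X, w x ≤ φ X) ∧
      (∀ i ≤ n, ∑ x ∈ S i, w x = φ (S i)) ∧
      ((∀ X Y : Finset E, X ⊆ Y → φ X ≤ φ Y) → ∀ x, 0 ≤ w x) := by
  choose entry hlt hnotMem hinsert using exists_chain_entry hS0 hSn hstep
  set w : E → ℝ := fun x => φ (S (entry x + 1)) - φ (S (entry x))
  have hw : ∀ i < n, ∀ x ∉ S i, S (i + 1) = insert x (S i) →
      w x = φ (S (i + 1)) - φ (S i) := by
    intro i hi x hx hxS
    obtain rfl : entry x = i := chain_entry_unique hstep (hlt x) hi (hnotMem x)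
      (hinsert x ▸ mem_insert_self x _) hx (hxS ▸ mem_insert_self x _)
    rfl
  refine ⟨w, fun X => ?_, sum_chain_eq hw h0 hS0 hstep, fun hmono x => ?_⟩
  · exact sum_le_of_subset_chain hw h0 hS0 hsub hstep n le_rfl X (hSn ▸ subset_univ X)
  · exact sub_nonneg.2 (hmono _ _ (hinsert x ▸ subset_insert x _))
end

section
/- Let E be a finite set and φ, ψ : 2^E → ℝ submodular setfunctions with φ(∅) = ψ(∅) = 0. Then for every X ⊆ E, max{α(X) : α additive with α(S) ≤ φ(S) and α(S) ≤ ψ(S) for all S ⊆ E} = (φ ∧ ψ)(X) := min_{Y ⊆ X} (φ(Y) + ψ(X \ Y)). -/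
open Finset

private lemma key_ind {E : Type*} [Fintype E] [DecidableEq E] (n : ℕ) :
    ∀ (X : Finset E) (φ ψ : Finset E → ℝ), X.card = n →
    φ ∅ = 0 → ψ ∅ = 0 →
    (∀ A, A ⊆ X → ∀ B, B ⊆ X → φ (A ∪ B) + φ (A ∩ B) ≤ φ A + φ B) →
    (∀ A, A ⊆ X → ∀ B, B ⊆ X → ψ (A ∪ B) + ψ (A ∩ B) ≤ ψ A + ψ B) →
    ∃ w : E → ℝ, (∀ S, S ⊆ X → (∑ y ∈ S, w y ≤ φ S ∧ ∑ y ∈ S, w y ≤ ψ S)) ∧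
      ∃ Y, Y ⊆ X ∧ φ Y + ψ (X \ Y) ≤ ∑ y ∈ X, w y := by
  induction n with
  | zero =>
      intro X φ ψ hcard hφ0 hψ0 _ _
      rw [Finset.card_eq_zero] at hcard
      subst hcard
      refine ⟨0, ?_, ∅, Finset.Subset.refl _, ?_⟩
      · intro S hS
        rw [Finset.subset_empty] at hS
        subst hS
        simp [hφ0, hψ0]
      · simp [hφ0, hψ0]
  | succ n ih =>
      intro X φ ψ hcard hφ0 hψ0 hφsub hψsub
      -- pick x ∈ X
      have hXne : X.Nonempty := Finset.card_pos.mp (by omega)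
      obtain ⟨x, hxX⟩ := hXne
      set X' : Finset E := X.erase x with hX'def
      have hxX' : x ∉ X' := Finset.notMem_erase x X
      have hins : insert x X' = X := Finset.insert_erase hxX
      have hX'card : X'.card = n := by
        rw [hX'def, Finset.card_erase_of_mem hxX, hcard]
        omega
      have hX'sub : X' ⊆ X := Finset.erase_subset x X
      -- the min value m
      set F : Finset E → ℝ := fun Y => φ Y + ψ (X \ Y) with hFdef
      have hne : (X.powerset.image F).Nonempty :=
        (Finset.powerset_nonempty X).image F
      set m : ℝ := (X.powerset.image F).min' hne with hmdef
      have hm_le : ∀ Y, Y ⊆ X → m ≤ φ Y + ψ (X \ Y) := by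
        intro Y hY
        exact Finset.min'_le _ _ (Finset.mem_image_of_mem F (Finset.mem_powerset.mpr hY))
      obtain ⟨Y₂, hY₂mem, hY₂⟩ := Finset.mem_image.mp (Finset.min'_mem _ hne)
      have hY₂X : Y₂ ⊆ X := Finset.mem_powerset.mp hY₂mem
      -- γ : the max of m - φ Y - ψ (X' \ Y) over Y ⊆ X'
      set G : Finset E → ℝ := fun Y => m - φ Y - ψ (X' \ Y) with hGdef
      have hne' : (X'.powerset.image G).Nonempty :=
        (Finset.powerset_nonempty X').image G
      set γ : ℝ := (X'.powerset.image G).max' hne' with hγdef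
      have hγ1 : ∀ Y, Y ⊆ X' → m - φ Y - ψ (X' \ Y) ≤ γ := by
        intro Y hY
        exact Finset.le_max' _ _ (Finset.mem_image_of_mem G (Finset.mem_powerset.mpr hY))
      obtain ⟨Y₀, hY₀mem, hY₀⟩ := Finset.mem_image.mp (Finset.max'_mem _ hne')
      have hY₀X' : Y₀ ⊆ X' := Finset.mem_powerset.mp hY₀mem
      have hxY₀ : x ∉ Y₀ := fun h => hxX' (hY₀X' h)
      have hγval : γ = m - φ Y₀ - ψ (X' \ Y₀) := hY₀.symm
      -- basic set identities
      have id1 : ∀ Y : Finset E, Y ⊆ X' → X \ Y = insert x (X' \ Y) := by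
        intro Y hY
        rw [← hins]
        ext a
        by_cases ha : a = x <;> simp [ha, hxX', fun h => hxX' (hY h)] <;> tauto
      have id2 : ∀ Y : Finset E, Y ⊆ X' → X \ insert x Y = X' \ Y := by
        intro Y hY
        rw [← hins]
        ext a
        by_cases ha : a = x <;> simp [ha, hxX'] <;> tauto
      -- hγ2 : γ ≤ φ (insert x Z) + ψ (X \ Z) - m for all Z ⊆ X'
      have hγ2 : ∀ Z, Z ⊆ X' → γ ≤ φ (insert x Z) + ψ (X \ Z) - m := by
        intro Z hZ
        have hxZ : x ∉ Z := fun h => hxX' (hZ h)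
        have h1 : φ (insert x (Y₀ ∪ Z)) + φ (Y₀ ∩ Z) ≤ φ Y₀ + φ (insert x Z) := by
          have := hφsub Y₀ (hY₀X'.trans hX'sub) (insert x Z)
            (by rw [← hins]; exact Finset.insert_subset_insert x hZ)
          have e1 : Y₀ ∪ insert x Z = insert x (Y₀ ∪ Z) := by
            ext a; by_cases ha : a = x <;> simp [ha] <;> tauto
          have e2 : Y₀ ∩ insert x Z = Y₀ ∩ Z := by
            ext a; by_cases ha : a = x <;> simp [ha, hxY₀] <;> tauto
          rwa [e1, e2] at this
        have h2 : ψ (X \ (Y₀ ∩ Z)) + ψ (X \ insert x (Y₀ ∪ Z)) ≤ ψ (X' \ Y₀) + ψ (X \ Z) := by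
          have hA : X' \ Y₀ ⊆ X := (Finset.sdiff_subset).trans hX'sub
          have hB : X \ Z ⊆ X := Finset.sdiff_subset
          have := hψsub (X' \ Y₀) hA (X \ Z) hB
          have e1 : (X' \ Y₀) ∪ (X \ Z) = X \ (Y₀ ∩ Z) := by
            rw [← hins]
            ext a; by_cases ha : a = x <;> simp [ha, hxX'] <;> tauto
          have e2 : (X' \ Y₀) ∩ (X \ Z) = X \ insert x (Y₀ ∪ Z) := by
            rw [← hins]
            ext a; by_cases ha : a = x <;> simp [ha, hxX'] <;> tauto
          rwa [e1, e2] at this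
        have hm1 : m ≤ φ (Y₀ ∩ Z) + ψ (X \ (Y₀ ∩ Z)) :=
          hm_le _ ((Finset.inter_subset_left).trans (hY₀X'.trans hX'sub))
        have hm2 : m ≤ φ (insert x (Y₀ ∪ Z)) + ψ (X \ insert x (Y₀ ∪ Z)) := by
          apply hm_le
          rw [← hins]
          exact Finset.insert_subset_insert x (Finset.union_subset hY₀X' hZ)
        rw [hγval]
        linarith
      -- hγ3 : γ ≤ φ {x}
      have hγ3 : γ ≤ φ {x} := by
        have h1 : φ (insert x Y₀) + φ ∅ ≤ φ Y₀ + φ {x} := by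
          have := hφsub Y₀ (hY₀X'.trans hX'sub) {x} (Finset.singleton_subset_iff.mpr hxX)
          have e1 : Y₀ ∪ {x} = insert x Y₀ := by ext a; simp
          have e2 : Y₀ ∩ {x} = ∅ := by
            ext a; simp; intro h1 h2; exact hxY₀ (h2 ▸ h1)
          rwa [e1, e2] at this
        have hm1 : m ≤ φ (insert x Y₀) + ψ (X \ insert x Y₀) := by
          apply hm_le
          rw [← hins]
          exact Finset.insert_subset_insert x hY₀X'
        rw [id2 Y₀ hY₀X'] at hm1
        rw [hγval, hφ0] at *
        linarith
      -- hγ4 : γ ≤ ψ {x}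
      have hγ4 : γ ≤ ψ {x} := by
        have h1 : ψ (insert x (X' \ Y₀)) + ψ ∅ ≤ ψ (X' \ Y₀) + ψ {x} := by
          have := hψsub (X' \ Y₀) ((Finset.sdiff_subset).trans hX'sub) {x}
            (Finset.singleton_subset_iff.mpr hxX)
          have e1 : (X' \ Y₀) ∪ {x} = insert x (X' \ Y₀) := by ext a; simp
          have e2 : (X' \ Y₀) ∩ {x} = ∅ := by
            ext a; simp; intro h1 _ h2; exact hxX' (h2 ▸ h1)
          rwa [e1, e2] at this
        have hm1 : m ≤ φ Y₀ + ψ (X \ Y₀) := hm_le _ (hY₀X'.trans hX'sub)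
        rw [id1 Y₀ hY₀X'] at hm1
        rw [hγval, hψ0] at *
        linarith
      -- truncated functions
      set φ' : Finset E → ℝ := fun S => min (φ S) (φ (insert x S) - γ) with hφ'def
      set ψ' : Finset E → ℝ := fun S => min (ψ S) (ψ (insert x S) - γ) with hψ'def
      have hφ'0 : φ' ∅ = 0 := by
        have : insert x (∅ : Finset E) = {x} := Finset.insert_empty
        simp only [hφ'def, this, hφ0]
        rw [min_eq_left]; linarith
      have hψ'0 : ψ' ∅ = 0 := by
        have : insert x (∅ : Finset E) = {x} := Finset.insert_empty
        simp only [hψ'def, this, hψ0]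
        rw [min_eq_left]; linarith
      -- submodularity of the truncations
      have truncsub : ∀ (θ : Finset E → ℝ),
          (∀ A, A ⊆ X → ∀ B, B ⊆ X → θ (A ∪ B) + θ (A ∩ B) ≤ θ A + θ B) →
          ∀ A, A ⊆ X' → ∀ B, B ⊆ X' →
            min (θ (A ∪ B)) (θ (insert x (A ∪ B)) - γ) + min (θ (A ∩ B)) (θ (insert x (A ∩ B)) - γ)
              ≤ min (θ A) (θ (insert x A) - γ) + min (θ B) (θ (insert x B) - γ) := by
        intro θ hsub A hA B hB
        have hAX : A ⊆ X := hA.trans hX'sub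
        have hBX : B ⊆ X := hB.trans hX'sub
        have hxA : x ∉ A := fun h => hxX' (hA h)
        have hxB : x ∉ B := fun h => hxX' (hB h)
        have hiA : insert x A ⊆ X := by rw [← hins]; exact Finset.insert_subset_insert x hA
        have hiB : insert x B ⊆ X := by rw [← hins]; exact Finset.insert_subset_insert x hB
        rcases min_cases (θ A) (θ (insert x A) - γ) with ⟨hA1, _⟩ | ⟨hA1, _⟩ <;>
          rcases min_cases (θ B) (θ (insert x B) - γ) with ⟨hB1, _⟩ | ⟨hB1, _⟩ <;>
          rw [hA1, hB1]
        · have := hsub A hAX B hBX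
          have l1 : min (θ (A ∪ B)) (θ (insert x (A ∪ B)) - γ) ≤ θ (A ∪ B) := min_le_left _ _
          have l2 : min (θ (A ∩ B)) (θ (insert x (A ∩ B)) - γ) ≤ θ (A ∩ B) := min_le_left _ _
          linarith
        · -- A picks θ A, B picks θ (insert x B) - γ : use pair (A, insert x B)
          have := hsub A hAX (insert x B) hiB
          have e1 : A ∪ insert x B = insert x (A ∪ B) := by
            ext a; by_cases ha : a = x <;> simp [ha] <;> tauto
          have e2 : A ∩ insert x B = A ∩ B := by
            ext a; by_cases ha : a = x <;> simp [ha, hxA] <;> tauto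
          rw [e1, e2] at this
          have l1 : min (θ (A ∪ B)) (θ (insert x (A ∪ B)) - γ) ≤ θ (insert x (A ∪ B)) - γ :=
            min_le_right _ _
          have l2 : min (θ (A ∩ B)) (θ (insert x (A ∩ B)) - γ) ≤ θ (A ∩ B) := min_le_left _ _
          linarith
        · have := hsub (insert x A) hiA B hBX
          have e1 : insert x A ∪ B = insert x (A ∪ B) := by
            ext a; by_cases ha : a = x <;> simp [ha] <;> tauto
          have e2 : insert x A ∩ B = A ∩ B := by
            ext a; by_cases ha : a = x <;> simp [ha, hxB] <;> tauto
          rw [e1, e2] at this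
          have l1 : min (θ (A ∪ B)) (θ (insert x (A ∪ B)) - γ) ≤ θ (insert x (A ∪ B)) - γ :=
            min_le_right _ _
          have l2 : min (θ (A ∩ B)) (θ (insert x (A ∩ B)) - γ) ≤ θ (A ∩ B) := min_le_left _ _
          linarith
        · have := hsub (insert x A) hiA (insert x B) hiB
          have e1 : insert x A ∪ insert x B = insert x (A ∪ B) := by
            ext a; by_cases ha : a = x <;> simp [ha] <;> tauto
          have e2 : insert x A ∩ insert x B = insert x (A ∩ B) := by
            ext a; by_cases ha : a = x <;> simp [ha] <;> tauto
          rw [e1, e2] at this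
          have l1 : min (θ (A ∪ B)) (θ (insert x (A ∪ B)) - γ) ≤ θ (insert x (A ∪ B)) - γ :=
            min_le_right _ _
          have l2 : min (θ (A ∩ B)) (θ (insert x (A ∩ B)) - γ) ≤ θ (insert x (A ∩ B)) - γ :=
            min_le_right _ _
          linarith
      -- apply IH
      obtain ⟨w', hw'feas, Y₁, hY₁X', hY₁⟩ :=
        ih X' φ' ψ' hX'card hφ'0 hψ'0 (truncsub φ hφsub) (truncsub ψ hψsub)
      -- the new weight function
      set w : E → ℝ := Function.update w' x γ with hwdef
      have hwx : w x = γ := Function.update_self x γ w'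
      have hwsum : ∀ S : Finset E, x ∉ S → ∑ y ∈ S, w y = ∑ y ∈ S, w' y := by
        intro S hxS
        apply Finset.sum_congr rfl
        intro y hy
        have hyx : y ≠ x := fun h => hxS (h ▸ hy)
        exact Function.update_of_ne hyx γ w'
      refine ⟨w, ?_, Y₂, hY₂X, ?_⟩
      · -- feasibility
        intro S hS
        by_cases hxS : x ∈ S
        · have hS' : S.erase x ⊆ X' := fun a ha => by
            rw [Finset.mem_erase] at ha
            exact Finset.mem_erase.mpr ⟨ha.1, hS ha.2⟩
          have hSins : insert x (S.erase x) = S := Finset.insert_erase hxS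
          have hsum : ∑ y ∈ S, w y = γ + ∑ y ∈ S.erase x, w' y := by
            conv_lhs => rw [← hSins]
            rw [Finset.sum_insert (Finset.notMem_erase x S), hwx,
              hwsum _ (Finset.notMem_erase x S)]
          obtain ⟨hf1, hf2⟩ := hw'feas _ hS'
          constructor
          · have : φ' (S.erase x) ≤ φ (insert x (S.erase x)) - γ := min_le_right _ _
            rw [hSins] at this
            rw [hsum]; linarith
          · have : ψ' (S.erase x) ≤ ψ (insert x (S.erase x)) - γ := min_le_right _ _
            rw [hSins] at this
            rw [hsum]; linarith
        · have hS' : S ⊆ X' := fun a ha => Finset.mem_erase.mpr ⟨fun h => hxS (h ▸ ha), hS ha⟩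
          obtain ⟨hf1, hf2⟩ := hw'feas _ hS'
          have l1 : φ' S ≤ φ S := min_le_left _ _
          have l2 : ψ' S ≤ ψ S := min_le_left _ _
          rw [hwsum S hxS]
          exact ⟨le_trans hf1 l1, le_trans hf2 l2⟩
      · -- the value bound : φ Y₂ + ψ (X \ Y₂) = m ≤ ∑_X w
        have hsumX : ∑ y ∈ X, w y = γ + ∑ y ∈ X', w' y := by
          rw [← hins, Finset.sum_insert hxX', hwx, hwsum _ hxX']
        have hmain : m ≤ γ + (φ' Y₁ + ψ' (X' \ Y₁)) := by
          have hY₁X : Y₁ ⊆ X := hY₁X'.trans hX'sub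
          have hxY₁ : x ∉ Y₁ := fun h => hxX' (hY₁X' h)
          have hd : X' \ Y₁ ⊆ X' := Finset.sdiff_subset
          rcases min_cases (φ Y₁) (φ (insert x Y₁) - γ) with ⟨hc1, _⟩ | ⟨hc1, _⟩ <;>
            rcases min_cases (ψ (X' \ Y₁)) (ψ (insert x (X' \ Y₁)) - γ) with ⟨hc2, _⟩ | ⟨hc2, _⟩ <;>
            simp only [hφ'def, hψ'def] at * <;> rw [hc1, hc2]
          · have := hγ1 Y₁ hY₁X'
            linarith
          · -- φ Y₁ + ψ (X \ Y₁) - γ + γ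
            have e1 : insert x (X' \ Y₁) = X \ Y₁ := (id1 Y₁ hY₁X').symm
            rw [e1]
            have := hm_le Y₁ hY₁X
            linarith
          · -- φ (insert x Y₁) - γ + ψ (X' \ Y₁) + γ
            have e1 : X' \ Y₁ = X \ insert x Y₁ := (id2 Y₁ hY₁X').symm
            rw [e1]
            have := hm_le (insert x Y₁) (by rw [← hins]; exact Finset.insert_subset_insert x hY₁X')
            linarith
          · have e1 : insert x (X' \ Y₁) = X \ Y₁ := (id1 Y₁ hY₁X').symm
            rw [e1]
            have := hγ2 Y₁ hY₁X'
            linarith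
        have hY₂val : φ Y₂ + ψ (X \ Y₂) = m := by rw [hmdef, ← hY₂]
        rw [hsumX]
        linarith

theorem stmt_15 {E : Type*} [Fintype E] [DecidableEq E]
    (φ ψ : Finset E → ℝ) (hφ0 : φ ∅ = 0) (hψ0 : ψ ∅ = 0)
    (hφ : ∀ X Y : Finset E, φ (X ∪ Y) + φ (X ∩ Y) ≤ φ X + φ Y)
    (hψ : ∀ X Y : Finset E, ψ (X ∪ Y) + ψ (X ∩ Y) ≤ ψ X + ψ Y)
    (X : Finset E) :
    ∃ m : ℝ,
      IsGreatest {r | ∃ w : E → ℝ,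
        (∀ S : Finset E, ∑ x ∈ S, w x ≤ φ S ∧ ∑ x ∈ S, w x ≤ ψ S) ∧
        r = ∑ x ∈ X, w x} m ∧
      IsLeast {r | ∃ Y ⊆ X, r = φ Y + ψ (X \ Y)} m := by
  obtain ⟨w, hwfeas, Y₀, hY₀X, hY₀⟩ :=
    key_ind X.card X φ ψ rfl hφ0 hψ0 (fun A _ B _ => hφ A B) (fun A _ B _ => hψ A B)
  -- a bound C such that θ T - θ S ≤ C for θ ∈ {φ, ψ}
  have hneφ : ((Finset.univ : Finset E).powerset.image φ).Nonempty :=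
    (Finset.powerset_nonempty _).image φ
  have hneψ : ((Finset.univ : Finset E).powerset.image ψ).Nonempty :=
    (Finset.powerset_nonempty _).image ψ
  set Mφ : ℝ := (((Finset.univ : Finset E).powerset).image φ).max' hneφ with hMφ
  set mφ : ℝ := (((Finset.univ : Finset E).powerset).image φ).min' hneφ with hmφ
  set Mψ : ℝ := (((Finset.univ : Finset E).powerset).image ψ).max' hneψ with hMψ
  set mψ : ℝ := (((Finset.univ : Finset E).powerset).image ψ).min' hneψ with hmψ
  set C : ℝ := max (Mφ - mφ) (Mψ - mψ) with hCdef
  have hφub : ∀ T : Finset E, φ T ≤ Mφ := fun T =>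
    Finset.le_max' _ _ (Finset.mem_image_of_mem φ (Finset.mem_powerset.mpr (Finset.subset_univ T)))
  have hφlb : ∀ T : Finset E, mφ ≤ φ T := fun T =>
    Finset.min'_le _ _ (Finset.mem_image_of_mem φ (Finset.mem_powerset.mpr (Finset.subset_univ T)))
  have hψub : ∀ T : Finset E, ψ T ≤ Mψ := fun T =>
    Finset.le_max' _ _ (Finset.mem_image_of_mem ψ (Finset.mem_powerset.mpr (Finset.subset_univ T)))
  have hψlb : ∀ T : Finset E, mψ ≤ ψ T := fun T =>
    Finset.min'_le _ _ (Finset.mem_image_of_mem ψ (Finset.mem_powerset.mpr (Finset.subset_univ T)))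
  have hCφ : ∀ S T : Finset E, φ T - φ S ≤ C := by
    intro S T
    have h1 := hφub T
    have h2 := hφlb S
    have : Mφ - mφ ≤ C := le_max_left _ _
    linarith
  have hCψ : ∀ S T : Finset E, ψ T - ψ S ≤ C := by
    intro S T
    have h1 := hψub T
    have h2 := hψlb S
    have : Mψ - mψ ≤ C := le_max_right _ _
    linarith
  have hC0 : 0 ≤ C := by have := hCφ ∅ ∅; linarith
  -- extended weights
  set v : E → ℝ := fun y => if y ∈ X then w y else -C with hvdef
  have hvX : ∀ S : Finset E, S ⊆ X → ∑ y ∈ S, v y = ∑ y ∈ S, w y := by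
    intro S hS
    apply Finset.sum_congr rfl
    intro y hy
    simp [hvdef, hS hy]
  have hvfeas : ∀ S : Finset E, ∑ y ∈ S, v y ≤ φ S ∧ ∑ y ∈ S, v y ≤ ψ S := by
    intro S
    have hsplit : ∑ y ∈ S ∩ X, v y + ∑ y ∈ S \ X, v y = ∑ y ∈ S, v y :=
      Finset.sum_inter_add_sum_sdiff S X v
    have h1 : ∑ y ∈ S ∩ X, v y = ∑ y ∈ S ∩ X, w y := hvX _ (Finset.inter_subset_right)
    have h2 : ∑ y ∈ S \ X, v y = -((S \ X).card * C) := by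
      have : ∀ y ∈ S \ X, v y = -C := by
        intro y hy
        rw [Finset.mem_sdiff] at hy
        simp [hvdef, hy.2]
      rw [Finset.sum_congr rfl this, Finset.sum_const, nsmul_eq_mul]
      ring
    obtain ⟨hw1, hw2⟩ := hwfeas (S ∩ X) (Finset.inter_subset_right)
    by_cases hSX : S ⊆ X
    · have : S ∩ X = S := Finset.inter_eq_left.mpr hSX
      rw [this] at hw1 hw2
      rw [← hsplit, h1, this]
      have hd : S \ X = ∅ := Finset.sdiff_eq_empty_iff_subset.mpr hSX
      rw [hd] at h2 ⊢
      simp only [Finset.sum_empty]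
      constructor <;> linarith
    · have hd : (S \ X).Nonempty := by
        rw [Finset.sdiff_nonempty]
        exact hSX
      have hcard : (1 : ℝ) ≤ (S \ X).card := by
        have := Finset.card_pos.mpr hd
        exact_mod_cast this
      have hkey : ∑ y ∈ S, v y ≤ φ (S ∩ X) - C ∧ ∑ y ∈ S, v y ≤ ψ (S ∩ X) - C := by
        have hCC : -(((S \ X).card : ℝ) * C) ≤ -C := by nlinarith
        constructor <;> (rw [← hsplit, h1, h2]; linarith)
      have hφS := hCφ S (S ∩ X)
      have hψS := hCψ S (S ∩ X)
      exact ⟨by linarith [hkey.1], by linarith [hkey.2]⟩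
  -- weak duality
  have hweak : ∀ u : E → ℝ, (∀ S : Finset E, ∑ y ∈ S, u y ≤ φ S ∧ ∑ y ∈ S, u y ≤ ψ S) →
      ∀ Y, Y ⊆ X → ∑ y ∈ X, u y ≤ φ Y + ψ (X \ Y) := by
    intro u hu Y hY
    have hsplit : ∑ y ∈ X \ Y, u y + ∑ y ∈ Y, u y = ∑ y ∈ X, u y :=
      Finset.sum_sdiff hY
    have h1 := (hu Y).1
    have h2 := (hu (X \ Y)).2
    linarith
  set m : ℝ := ∑ y ∈ X, w y with hmdef
  have hvm : ∑ y ∈ X, v y = m := hvX X (Finset.Subset.refl X)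
  have hmY₀ : m = φ Y₀ + ψ (X \ Y₀) := by
    have h1 := hweak v hvfeas Y₀ hY₀X
    rw [hvm] at h1
    linarith
  refine ⟨m, ⟨⟨v, hvfeas, hvm.symm⟩, ?_⟩, ⟨⟨Y₀, hY₀X, hmY₀⟩, ?_⟩⟩
  · rintro r ⟨u, hu, rfl⟩
    have := hweak u hu Y₀ hY₀X
    linarith [hmY₀]
  · rintro r ⟨Y, hY, rfl⟩
    have := hweak v hvfeas Y hY
    rw [hvm] at this
    exact this
end

section
/- Let φ be an increasing submodular setfunction on a sigma-algebra (J, B). Define φ_•(X) = inf over all increasing sequences X₁ ⊆ X₂ ⊆ … in B with ∪ₙ Xₙ = X of limₙ φ(Xₙ). Then φ_• is increasing, submodular, and continuous from below (i.e., for any increasing sequence Xₙ with union X, φ_•(Xₙ) → φ_•(X)). -/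
/-!
Monotonicity and submodularity of `φ_•` pass to the limit along exhaustions: intersect an
exhaustion of `Y` with `X ⊆ Y`, resp. take unions and intersections of exhaustions of `X` and `Y`.
For continuity from below along `Sₙ ↑ X`, choose exhaustions `Rₙ` of `Sₙ` that are
`δₙ`-optimal with `∑ δₙ ≤ ε` and accumulate them. By submodularity `R₀ ∪ ⋯ ∪ Rₙ` is a
`(δ₀ + ⋯ + δₙ)`-optimal exhaustion of `Sₙ`, and the diagonal `k ↦ R₀ k ∪ ⋯ ∪ R_k k` exhausts
`X`, so `φ_• X ≤ sup φ_• Sₙ + ε`.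
-/

open Filter Set Topology

theorem MeasurableSet.accumulate {J : Type*} [MeasurableSpace J] {s : ℕ → Set J}
    (hs : ∀ n, MeasurableSet (s n)) (n : ℕ) : MeasurableSet (Set.accumulate s n) :=
  .iUnion fun i => .iUnion fun _ => hs i

namespace Set

variable {α : Type*}

theorem iUnion_accumulate_comm (R : ℕ → ℕ → Set α) (n : ℕ) :
    ⋃ k, accumulate (fun i => R i k) n = accumulate (fun i => ⋃ k, R i k) n := by
  ext x
  simp only [mem_iUnion, mem_accumulate]
  exact ⟨fun ⟨k, i, hi, hx⟩ => ⟨i, hi, k, hx⟩, fun ⟨i, hi, k, hx⟩ => ⟨k, i, hi, hx⟩⟩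

theorem iUnion_accumulate_diag {R : ℕ → ℕ → Set α} (hR : ∀ n, Monotone (R n)) :
    ⋃ k, accumulate (fun n => R n k) k = ⋃ n, ⋃ k, R n k := by
  refine subset_antisymm (iUnion_subset fun k => ?_) (iUnion₂_subset fun n k => ?_)
  · exact (accumulate_subset_iUnion k).trans (iUnion_mono fun n => subset_iUnion (R n) k)
  · have hk : R n k ⊆ R n (max n k) := hR n (le_max_right n k)
    have hn : R n (max n k) ⊆ accumulate (fun i => R i (max n k)) (max n k) :=
      (subset_accumulate (s := fun i => R i (max n k))).trans
        (monotone_accumulate (le_max_left n k))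
    exact (hk.trans hn).trans (subset_iUnion (fun j => accumulate (fun i => R i j) j) (max n k))

end Set

section SetFunction

variable {J : Type*} [MeasurableSpace J] {φ : Set J → ℝ} {S T : ℕ → Set J}

def exhaustionLimits (φ : Set J → ℝ) (X : Set J) : Set ℝ :=
  {r | ∃ S : ℕ → Set J, (∀ n, MeasurableSet (S n)) ∧ Monotone S ∧ (⋃ n, S n) = X ∧
    Tendsto (fun n => φ (S n)) atTop (𝓝 r)}

def IsSubmodular (φ : Set J → ℝ) : Prop :=
  ∀ X Y : Set J, MeasurableSet X → MeasurableSet Y → φ (X ∪ Y) + φ (X ∩ Y) ≤ φ X + φ Y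

def IsLowerRegularization (φ lc : Set J → ℝ) : Prop :=
  ∀ X : Set J, MeasurableSet X → IsGLB (exhaustionLimits φ X) (lc X)

theorem bddAbove_range_of_monotoneOn (hmono : MonotoneOn φ {s | MeasurableSet s})
    (hS : ∀ n, MeasurableSet (S n)) : BddAbove (range fun n => φ (S n)) :=
  ⟨φ (⋃ n, S n), forall_mem_range.2 fun n => hmono (hS n) (.iUnion hS) (subset_iUnion S n)⟩

theorem tendsto_iSup_of_monotoneOn (hmono : MonotoneOn φ {s | MeasurableSet s})
    (hS : ∀ n, MeasurableSet (S n)) (hSm : Monotone S) :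
    Tendsto (fun n => φ (S n)) atTop (𝓝 (⨆ n, φ (S n))) :=
  tendsto_atTop_ciSup (fun _ _ h => hmono (hS _) (hS _) (hSm h))
    (bddAbove_range_of_monotoneOn hmono hS)

theorem iSup_union_add_iSup_inter_le (hmono : MonotoneOn φ {s | MeasurableSet s})
    (hsub : IsSubmodular φ)
    (hS : ∀ n, MeasurableSet (S n)) (hSm : Monotone S)
    (hT : ∀ n, MeasurableSet (T n)) (hTm : Monotone T) :
    (⨆ n, φ (S n ∪ T n)) + ⨆ n, φ (S n ∩ T n) ≤ (⨆ n, φ (S n)) + ⨆ n, φ (T n) :=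
  le_of_tendsto_of_tendsto'
    ((tendsto_iSup_of_monotoneOn hmono (fun n => (hS n).union (hT n)) (hSm.union hTm)).add
      (tendsto_iSup_of_monotoneOn hmono (fun n => (hS n).inter (hT n)) (hSm.inter hTm)))
    ((tendsto_iSup_of_monotoneOn hmono hS hSm).add (tendsto_iSup_of_monotoneOn hmono hT hTm))
    fun n => hsub _ _ (hS n) (hT n)

namespace IsLowerRegularization

variable {lc : Set J → ℝ}

theorem le_iSup (hlc : IsLowerRegularization φ lc) (hmono : MonotoneOn φ {s | MeasurableSet s})
    (hS : ∀ n, MeasurableSet (S n)) (hSm : Monotone S) : lc (⋃ n, S n) ≤ ⨆ n, φ (S n) :=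
  (hlc _ (.iUnion hS)).1 ⟨S, hS, hSm, rfl, tendsto_iSup_of_monotoneOn hmono hS hSm⟩

theorem le_of_forall_le_iSup (hlc : IsLowerRegularization φ lc)
    (hmono : MonotoneOn φ {s | MeasurableSet s}) {X : Set J} (hX : MeasurableSet X) {b : ℝ}
    (H : ∀ S : ℕ → Set J, (∀ n, MeasurableSet (S n)) → Monotone S → (⋃ n, S n) = X →
      b ≤ ⨆ n, φ (S n)) : b ≤ lc X :=
  (hlc X hX).2 fun _ ⟨S, hS, hSm, hSX, hr⟩ =>
    (H S hS hSm hSX).trans_eq (tendsto_nhds_unique (tendsto_iSup_of_monotoneOn hmono hS hSm) hr)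

theorem exists_iSup_lt (hlc : IsLowerRegularization φ lc)
    (hmono : MonotoneOn φ {s | MeasurableSet s}) {X : Set J} (hX : MeasurableSet X) {b : ℝ}
    (hb : lc X < b) : ∃ S : ℕ → Set J, (∀ n, MeasurableSet (S n)) ∧ Monotone S ∧
      (⋃ n, S n) = X ∧ (⨆ n, φ (S n)) < b := by
  obtain ⟨r, ⟨S, hS, hSm, hSX, hr⟩, -, hrb⟩ := (hlc X hX).exists_between hb
  exact ⟨S, hS, hSm, hSX,
    (tendsto_nhds_unique (tendsto_iSup_of_monotoneOn hmono hS hSm) hr).trans_lt hrb⟩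

theorem monotoneOn (hlc : IsLowerRegularization φ lc)
    (hmono : MonotoneOn φ {s | MeasurableSet s}) : MonotoneOn lc {s | MeasurableSet s} := by
  intro X hX Y hY hXY
  refine hlc.le_of_forall_le_iSup hmono hY fun S hS hSm hSY => ?_
  have hSX : (⋃ n, S n ∩ X) = X := by rw [← iUnion_inter, hSY, inter_eq_right.2 hXY]
  calc lc X = lc (⋃ n, S n ∩ X) := by rw [hSX]
    _ ≤ ⨆ n, φ (S n ∩ X) :=
      hlc.le_iSup hmono (fun n => (hS n).inter hX) fun _ _ h => inter_subset_inter_left X (hSm h)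
    _ ≤ ⨆ n, φ (S n) :=
      ciSup_mono (bddAbove_range_of_monotoneOn hmono hS)
        fun n => hmono ((hS n).inter hX) (hS n) inter_subset_left

theorem union_add_inter_le (hlc : IsLowerRegularization φ lc)
    (hmono : MonotoneOn φ {s | MeasurableSet s}) (hsub : IsSubmodular φ)
    {X Y : Set J} (hX : MeasurableSet X) (hY : MeasurableSet Y) :
    lc (X ∪ Y) + lc (X ∩ Y) ≤ lc X + lc Y := by
  suffices lc (X ∪ Y) + lc (X ∩ Y) - lc Y ≤ lc X by linarith
  refine hlc.le_of_forall_le_iSup hmono hX fun S hS hSm hSX => ?_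
  suffices lc (X ∪ Y) + lc (X ∩ Y) - ⨆ n, φ (S n) ≤ lc Y by linarith
  refine hlc.le_of_forall_le_iSup hmono hY fun T hT hTm hTY => ?_
  have hunion := hlc.le_iSup hmono (fun n => (hS n).union (hT n)) (hSm.union hTm)
  have hinter := hlc.le_iSup hmono (fun n => (hS n).inter (hT n)) (hSm.inter hTm)
  rw [iUnion_union_distrib, hSX, hTY] at hunion
  rw [iUnion_inter_of_monotone hSm hTm, hSX, hTY] at hinter
  linarith [iSup_union_add_iSup_inter_le hmono hsub hS hSm hT hTm]

theorem iSup_union_add_le (hlc : IsLowerRegularization φ lc)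
    (hmono : MonotoneOn φ {s | MeasurableSet s}) (hsub : IsSubmodular φ)
    (hS : ∀ n, MeasurableSet (S n)) (hSm : Monotone S)
    (hT : ∀ n, MeasurableSet (T n)) (hTm : Monotone T) (hST : (⋃ n, S n) ⊆ ⋃ n, T n) :
    (⨆ n, φ (S n ∪ T n)) + lc (⋃ n, S n) ≤ (⨆ n, φ (S n)) + ⨆ n, φ (T n) := by
  have hinter := hlc.le_iSup hmono (fun n => (hS n).inter (hT n)) (hSm.inter hTm)
  rw [iUnion_inter_of_monotone hSm hTm, inter_eq_left.2 hST] at hinter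
  linarith [iSup_union_add_iSup_inter_le hmono hsub hS hSm hT hTm]

theorem iSup_accumulate_sub_le (hlc : IsLowerRegularization φ lc)
    (hmono : MonotoneOn φ {s | MeasurableSet s}) (hsub : IsSubmodular φ)
    (hSm : Monotone S) {R : ℕ → ℕ → Set J} (hR : ∀ n k, MeasurableSet (R n k))
    (hRm : ∀ n, Monotone (R n)) (hRS : ∀ n, (⋃ k, R n k) = S n) (n : ℕ) :
    (⨆ k, φ (accumulate (fun i => R i k) n)) - lc (S n) ≤
      ∑ i ∈ Finset.range (n + 1), ((⨆ k, φ (R i k)) - lc (S i)) := by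
  induction n with
  | zero => simp only [accumulate_zero_nat, zero_add, Finset.sum_range_one, le_refl]
  | succ n ih =>
    have hTS : (⋃ k, accumulate (fun i => R i k) n) = S n := by
      rw [iUnion_accumulate_comm, funext hRS, ← partialSups_eq_accumulate, hSm.partialSups_eq]
    have hstep := hlc.iSup_union_add_le hmono hsub (fun k => .accumulate (hR · k) n)
      (fun _ _ h => iUnion₂_mono fun i _ => hRm i h) (hR (n + 1)) (hRm (n + 1))
      (by rw [hTS, hRS]; exact hSm n.le_succ)
    simp only [hTS, ← accumulate_succ] at hstep
    rw [Finset.sum_range_succ]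
    linarith

theorem le_iSup_add (hlc : IsLowerRegularization φ lc)
    (hmono : MonotoneOn φ {s | MeasurableSet s}) (hsub : IsSubmodular φ)
    (hS : ∀ n, MeasurableSet (S n)) (hSm : Monotone S) {ε : ℝ} (hε : 0 < ε) :
    lc (⋃ n, S n) ≤ (⨆ n, lc (S n)) + ε := by
  obtain ⟨δ, hδ, hδε⟩ := (countable_univ (α := ℕ)).exists_pos_forall_sum_le hε
  choose R hR hRm hRS hRδ using fun n =>
    hlc.exists_iSup_lt hmono (hS n) (lt_add_of_pos_right (lc (S n)) (hδ n))
  have hD := hlc.le_iSup hmono (fun k => .accumulate (hR · k) k)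
    fun k l h => (monotone_accumulate h).trans (iUnion₂_mono fun i _ => hRm i h)
  rw [iUnion_accumulate_diag hRm, iUnion_congr hRS] at hD
  refine hD.trans (ciSup_le fun k => ?_)
  have hsum : ∑ i ∈ Finset.range (k + 1), ((⨆ j, φ (R i j)) - lc (S i)) ≤ ε :=
    (Finset.sum_le_sum fun i _ => by linarith [hRδ i]).trans (hδε _ (subset_univ _))
  calc φ (accumulate (fun i => R i k) k) ≤ ⨆ j, φ (accumulate (fun i => R i j) k) :=
        le_ciSup (bddAbove_range_of_monotoneOn hmono fun j => .accumulate (hR · j) k) k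
    _ ≤ lc (S k) + ε := by linarith [hlc.iSup_accumulate_sub_le hmono hsub hSm hR hRm hRS k]
    _ ≤ (⨆ n, lc (S n)) + ε :=
        add_le_add_left (le_ciSup (bddAbove_range_of_monotoneOn (hlc.monotoneOn hmono) hS) k) ε

theorem tendsto_iUnion (hlc : IsLowerRegularization φ lc)
    (hmono : MonotoneOn φ {s | MeasurableSet s}) (hsub : IsSubmodular φ)
    (hS : ∀ n, MeasurableSet (S n)) (hSm : Monotone S) :
    Tendsto (fun n => lc (S n)) atTop (𝓝 (lc (⋃ n, S n))) := by
  have hlcm := hlc.monotoneOn hmono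
  convert tendsto_iSup_of_monotoneOn hlcm hS hSm using 2
  exact le_antisymm (le_of_forall_pos_le_add fun ε hε => hlc.le_iSup_add hmono hsub hS hSm hε)
    (ciSup_le fun n => hlcm (hS n) (.iUnion hS) (subset_iUnion S n))

end IsLowerRegularization

end SetFunction

theorem stmt_17 {J : Type*} [MeasurableSpace J] (φ : Set J → ℝ)
    (hmono : ∀ X Y : Set J, MeasurableSet X → MeasurableSet Y → X ⊆ Y → φ X ≤ φ Y)
    (hsub : ∀ X Y : Set J, MeasurableSet X → MeasurableSet Y →
      φ (X ∪ Y) + φ (X ∩ Y) ≤ φ X + φ Y)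
    (lc : Set J → ℝ)
    (hlc : ∀ X : Set J, MeasurableSet X → IsGLB
      {r | ∃ S : ℕ → Set J, (∀ n, MeasurableSet (S n)) ∧ Monotone S ∧
        (⋃ n, S n) = X ∧
        Filter.Tendsto (fun n => φ (S n)) Filter.atTop (nhds r)} (lc X)) :
    (∀ X Y : Set J, MeasurableSet X → MeasurableSet Y → X ⊆ Y → lc X ≤ lc Y) ∧
    (∀ X Y : Set J, MeasurableSet X → MeasurableSet Y →
      lc (X ∪ Y) + lc (X ∩ Y) ≤ lc X + lc Y) ∧
    (∀ S : ℕ → Set J, (∀ n, MeasurableSet (S n)) → Monotone S →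
      Filter.Tendsto (fun n => lc (S n)) Filter.atTop (nhds (lc (⋃ n, S n)))) := by
  have hφ : MonotoneOn φ {s | MeasurableSet s} := fun X hX Y hY => hmono X Y hX hY
  have hreg : IsLowerRegularization φ lc := hlc
  exact ⟨fun X Y hX hY => hreg.monotoneOn hφ hX hY,
    fun X Y hX hY => hreg.union_add_inter_le hφ hsub hX hY,
    fun S hS hSm => hreg.tendsto_iUnion hφ hsub hS hSm⟩
end

section
/- Let φ be an increasing submodular setfunction on a sigma-algebra (J, B) that is continuous from above (for every decreasing sequence Aₙ with intersection A, φ(Aₙ) → φ(A)). Then the Björner pseudometric d(X, Y) = 2φ(X ∪ Y) − φ(X) − φ(Y) is complete: every Cauchy sequence of sets in B converges in d to some set in B. -/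
/-!
The limit of a fast Cauchy sequence `Y` is `limsup Y = ⋂ N, ⋃ k ≥ N, Y k`. Submodularity is a
law of diminishing returns: adding `Y (k + 1)` to a set that already contains `Y k` raises `φ`
by at most `d (Y k) (Y (k + 1))`. Hence
`φ (⋃ k ≥ N, Y k) ≤ φ (Y N) + ∑ k ≥ N, d (Y k) (Y (k + 1))`, where passing to the infinite union
uses continuity from below; this follows from continuity from above, applied to the complements
`(⋃ A) \ A n`, by submodularity. As `d A B = φ B - φ A` for `A ⊆ B`, the triangle inequality
through `⋃ k ≥ N, Y k` bounds `d (Y N) (limsup Y)` by that tail sum plus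
`φ (⋃ k ≥ N, Y k) - φ (limsup Y)`, which tends to `0` by continuity from above.
-/

open Filter Set Topology

section

variable {J : Type*} {φ : Set J → ℝ}

def SubmodularOn (φ : Set J → ℝ) (S : Set (Set J)) : Prop :=
  ∀ X ∈ S, ∀ Y ∈ S, φ (X ∪ Y) + φ (X ∩ Y) ≤ φ X + φ Y

def bjornerDist (φ : Set J → ℝ) (X Y : Set J) : ℝ := 2 * φ (X ∪ Y) - φ X - φ Y

theorem bjornerDist_comm (φ : Set J → ℝ) (X Y : Set J) :
    bjornerDist φ X Y = bjornerDist φ Y X := by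
  simp only [bjornerDist, union_comm]; ring

theorem bjornerDist_self (φ : Set J → ℝ) (X : Set J) : bjornerDist φ X X = 0 := by
  simp only [bjornerDist, union_self]; ring

theorem bjornerDist_of_subset {X Y : Set J} (h : X ⊆ Y) : bjornerDist φ X Y = φ Y - φ X := by
  rw [bjornerDist, union_eq_self_of_subset_left h]; ring

variable [MeasurableSpace J]

def IsContinuousFromAbove (φ : Set J → ℝ) : Prop :=
  ∀ A : ℕ → Set J, (∀ n, MeasurableSet (A n)) → Antitone A →
    Tendsto (fun n => φ (A n)) atTop (𝓝 (φ (⋂ n, A n)))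

theorem sub_le_bjornerDist (hmono : MonotoneOn φ {s | MeasurableSet s}) {X Y : Set J}
    (hX : MeasurableSet X) (hY : MeasurableSet Y) : φ (X ∪ Y) - φ X ≤ bjornerDist φ X Y := by
  have := hmono hY (hX.union hY) subset_union_right
  rw [bjornerDist]; linarith

theorem bjornerDist_nonneg (hmono : MonotoneOn φ {s | MeasurableSet s}) {X Y : Set J}
    (hX : MeasurableSet X) (hY : MeasurableSet Y) : 0 ≤ bjornerDist φ X Y := by
  have := hmono hX (hX.union hY) subset_union_left
  linarith [sub_le_bjornerDist hmono hX hY]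

theorem SubmodularOn.union_sub_le_union_sub (hsub : SubmodularOn φ {s | MeasurableSet s})
    (hmono : MonotoneOn φ {s | MeasurableSet s}) {A U B : Set J} (hA : MeasurableSet A)
    (hU : MeasurableSet U) (hB : MeasurableSet B) (hAU : A ⊆ U) :
    φ (U ∪ B) - φ U ≤ φ (A ∪ B) - φ A := by
  have hsubm := hsub U hU (A ∪ B) (hA.union hB)
  rw [← union_assoc, union_eq_self_of_subset_right hAU] at hsubm
  have := hmono hA (hU.inter (hA.union hB)) (subset_inter hAU subset_union_left)
  linarith

theorem bjornerDist_triangle (hmono : MonotoneOn φ {s | MeasurableSet s})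
    (hsub : SubmodularOn φ {s | MeasurableSet s}) {A B C : Set J} (hA : MeasurableSet A)
    (hB : MeasurableSet B) (hC : MeasurableSet C) :
    bjornerDist φ A C ≤ bjornerDist φ A B + bjornerDist φ B C := by
  have hsubm := hsub (A ∪ B) (hA.union hB) (B ∪ C) (hB.union hC)
  have hinter := hmono hB ((hA.union hB).inter (hB.union hC))
    (subset_inter subset_union_right subset_union_left)
  have hunion := hmono (hA.union hC) ((hA.union hB).union (hB.union hC))
    (union_subset_union subset_union_left subset_union_right)
  simp only [bjornerDist]; linarith

theorem IsContinuousFromAbove.tendsto_iUnion (hcont : IsContinuousFromAbove φ)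
    (hmono : MonotoneOn φ {s | MeasurableSet s}) (hsub : SubmodularOn φ {s | MeasurableSet s})
    {A : ℕ → Set J} (hA : ∀ n, MeasurableSet (A n)) (hAmono : Monotone A) :
    Tendsto (fun n => φ (A n)) atTop (𝓝 (φ (⋃ n, A n))) := by
  set V := ⋃ n, A n
  have hV : MeasurableSet V := .iUnion hA
  have hdiff : Tendsto (fun n => φ (V \ A n)) atTop (𝓝 (φ ∅)) := by
    have h := hcont (fun n => V \ A n) (fun n => hV.diff (hA n))
      (fun m n hmn => sdiff_subset_sdiff_right (hAmono hmn))
    rwa [← sdiff_iUnion, sdiff_self] at h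
  have hupper : ∀ n, φ V - (φ (V \ A n) - φ ∅) ≤ φ (A n) := fun n => by
    have h := hsub (A n) (hA n) (V \ A n) (hV.diff (hA n))
    rw [union_sdiff_cancel (subset_iUnion A n), inter_sdiff_self] at h
    linarith
  have hlower : ∀ n, φ (A n) ≤ φ V := fun n => hmono (hA n) hV (subset_iUnion A n)
  refine tendsto_of_tendsto_of_tendsto_of_le_of_le ?_ tendsto_const_nhds hupper hlower
  simpa using tendsto_const_nhds.sub (hdiff.sub_const (φ ∅))

theorem apply_iUnion_le_add_tsum (hcont : IsContinuousFromAbove φ)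
    (hmono : MonotoneOn φ {s | MeasurableSet s}) (hsub : SubmodularOn φ {s | MeasurableSet s})
    {Y : ℕ → Set J} (hY : ∀ n, MeasurableSet (Y n)) {ε : ℕ → ℝ} (hε : Summable ε)
    (hstep : ∀ k, bjornerDist φ (Y k) (Y (k + 1)) ≤ ε k) :
    φ (⋃ k, Y k) ≤ φ (Y 0) + ∑' k, ε k := by
  have hacc : ∀ n, MeasurableSet (accumulate Y n) := fun n =>
    .iUnion fun k => .iUnion fun _ => hY k
  have hpartial : ∀ n, φ (accumulate Y n) ≤ φ (Y 0) + ∑ k ∈ Finset.range n, ε k := by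
    intro n
    induction n with
    | zero => simp [accumulate]
    | succ n ih =>
      have hreturns := hsub.union_sub_le_union_sub hmono (hY n) (hacc n) (hY (n + 1))
        subset_accumulate
      have hdist := sub_le_bjornerDist hmono (hY n) (hY (n + 1))
      rw [accumulate_succ, Finset.sum_range_succ]
      linarith [hstep n]
  rw [← iUnion_accumulate]
  exact le_of_tendsto_of_tendsto' (hcont.tendsto_iUnion hmono hsub hacc monotone_accumulate)
    (tendsto_const_nhds.add hε.hasSum.tendsto_sum_nat) hpartial

theorem tendsto_bjornerDist_limsup (hcont : IsContinuousFromAbove φ)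
    (hmono : MonotoneOn φ {s | MeasurableSet s}) (hsub : SubmodularOn φ {s | MeasurableSet s})
    {Y : ℕ → Set J} (hY : ∀ n, MeasurableSet (Y n)) {ε : ℕ → ℝ} (hε : Summable ε)
    (hstep : ∀ k, bjornerDist φ (Y k) (Y (k + 1)) ≤ ε k) :
    Tendsto (fun n => bjornerDist φ (Y n) (limsup Y atTop)) atTop (𝓝 0) := by
  set V : ℕ → Set J := fun n => ⋃ k, Y (k + n)
  have hV : ∀ n, MeasurableSet (V n) := fun n => .iUnion fun k => hY (k + n)
  have hVanti : Antitone V := fun m n hmn => iUnion_subset fun k =>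
    subset_iUnion_of_subset (k + (n - m)) (by rw [add_assoc, Nat.sub_add_cancel hmn])
  have hZ : limsup Y atTop = ⋂ n, V n := limsup_eq_iInf_iSup_of_nat'
  have hZmeas : MeasurableSet (limsup Y atTop) := MeasurableSet.measurableSet_limsup hY
  have htail : ∀ n, φ (V n) ≤ φ (Y n) + ∑' k, ε (k + n) := fun n => by
    simpa using apply_iUnion_le_add_tsum hcont hmono hsub (fun k => hY (k + n))
      ((summable_nat_add_iff n).2 hε) (fun k => by rw [add_right_comm]; exact hstep (k + n))
  have hbound : ∀ n, bjornerDist φ (Y n) (limsup Y atTop) ≤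
      ∑' k, ε (k + n) + (φ (V n) - φ (limsup Y atTop)) := fun n => by
    have hYV : Y n ⊆ V n := subset_iUnion_of_subset 0 (by rw [zero_add])
    have hZV : limsup Y atTop ⊆ V n := hZ ▸ iInter_subset V n
    have htri := bjornerDist_triangle hmono hsub (hY n) (hV n) hZmeas
    rw [bjornerDist_of_subset hYV, bjornerDist_comm φ (V n), bjornerDist_of_subset hZV] at htri
    linarith [htail n]
  have hVlim : Tendsto (fun n => φ (V n)) atTop (𝓝 (φ (limsup Y atTop))) :=
    hZ ▸ hcont V hV hVanti
  refine squeeze_zero (fun n => ?_) hbound ?_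
  · exact bjornerDist_nonneg hmono (hY n) hZmeas
  · simpa using (tendsto_sum_nat_add ε).add (hVlim.sub_const (φ (limsup Y atTop)))

abbrev bjornerPseudoMetricSpace (hmono : MonotoneOn φ {s | MeasurableSet s})
    (hsub : SubmodularOn φ {s | MeasurableSet s}) :
    PseudoMetricSpace {s : Set J // MeasurableSet s} where
  dist X Y := bjornerDist φ X Y
  dist_self X := bjornerDist_self φ X
  dist_comm X Y := bjornerDist_comm φ X Y
  dist_triangle X Y Z := bjornerDist_triangle hmono hsub X.2 Y.2 Z.2

theorem completeSpace_bjorner (hcont : IsContinuousFromAbove φ)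
    (hmono : MonotoneOn φ {s | MeasurableSet s}) (hsub : SubmodularOn φ {s | MeasurableSet s}) :
    letI := bjornerPseudoMetricSpace hmono hsub
    CompleteSpace {s : Set J // MeasurableSet s} := by
  let := bjornerPseudoMetricSpace hmono hsub
  refine Metric.complete_of_convergent_controlled_sequences (fun n => (1 / 2 : ℝ) ^ n)
    (fun n => by positivity) fun X hX => ?_
  have hXmeas (n : ℕ) : MeasurableSet (X n : Set J) := (X n).2
  refine ⟨⟨limsup (fun n => (X n : Set J)) atTop, .measurableSet_limsup hXmeas⟩,
    tendsto_iff_dist_tendsto_zero.2 ?_⟩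
  exact tendsto_bjornerDist_limsup hcont hmono hsub hXmeas summable_geometric_two
    fun k => (hX k k (k + 1) le_rfl k.le_succ).le

end

theorem stmt_19 {J : Type*} [MeasurableSpace J] (φ : Set J → ℝ)
    (hmono : ∀ X Y : Set J, MeasurableSet X → MeasurableSet Y → X ⊆ Y → φ X ≤ φ Y)
    (hsub : ∀ X Y : Set J, MeasurableSet X → MeasurableSet Y →
      φ (X ∪ Y) + φ (X ∩ Y) ≤ φ X + φ Y)
    (hcont : ∀ A : ℕ → Set J, (∀ n, MeasurableSet (A n)) → Antitone A →
      Filter.Tendsto (fun n => φ (A n)) Filter.atTop (nhds (φ (⋂ n, A n))))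
    (d : Set J → Set J → ℝ)
    (hd : ∀ X Y : Set J, d X Y = 2 * φ (X ∪ Y) - φ X - φ Y)
    (X : ℕ → Set J) (hXmeas : ∀ n, MeasurableSet (X n))
    (hcauchy : ∀ ε : ℝ, 0 < ε → ∃ N : ℕ, ∀ m ≥ N, ∀ n ≥ N, d (X m) (X n) < ε) :
    ∃ Z : Set J, MeasurableSet Z ∧
      Filter.Tendsto (fun n => d (X n) Z) Filter.atTop (nhds 0) := by
  have hmono' : MonotoneOn φ {s | MeasurableSet s} := fun A hA B hB => hmono A B hA hB
  have hsub' : SubmodularOn φ {s | MeasurableSet s} := fun A hA B hB => hsub A B hA hB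
  obtain rfl : d = bjornerDist φ := funext₂ hd
  let := bjornerPseudoMetricSpace hmono' hsub'
  have := completeSpace_bjorner hcont hmono' hsub'
  let u : ℕ → {s : Set J // MeasurableSet s} := fun n => ⟨X n, hXmeas n⟩
  obtain ⟨Z, hZ⟩ := cauchySeq_tendsto_of_complete (Metric.cauchySeq_iff.2 hcauchy : CauchySeq u)
  exact ⟨Z, Z.2, tendsto_iff_dist_tendsto_zero.1 hZ⟩
end
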